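/- arXiv:2308.02064 — 6 statements merged into one kernel-verified Lean document; each statement's English description precedes it below -/
import Mathlib

section
/- For even n = 2l and 1 ≤ r ≤ n, the sum over all tuples (k_1, ..., k_r) of positive integers with k_1 + ... + k_r = n of (-1)^{k_2 + k_4 + ... + k_{2⌊r/2⌋}} equals (-1)^{⌊r/2⌋} · binom(l-1, ⌊(r-1)/2⌋), where the sum is interpreted as 1 when r = 1. -/
open Finset

private def Acomp (n r : ℕ) : ℤ :=
  ∑ k ∈ (Finset.Nat.antidiagonalTuple r n).filter (fun k => ∀ i, 1 ≤ k i),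
    (-1 : ℤ) ^ (∑ i ∈ Finset.univ.filter (fun i : Fin r => i.val % 2 = 1), k i)

private def ccomp (n r : ℕ) : ℤ :=
  if n < r ∨ (r % 2 = 0 ∧ n % 2 = 1) then 0
  else (-1) ^ (r / 2) * ((n - 1) / 2).choose ((r - 1) / 2)

private lemma Acomp_one (n : ℕ) : Acomp n 1 = ccomp n 1 := by
  unfold Acomp ccomp
  have hfil : (Finset.univ.filter (fun i : Fin 1 => i.val % 2 = 1)) = ∅ := by decide
  rw [hfil]
  simp only [Finset.sum_empty, pow_zero]
  rcases Nat.eq_zero_or_pos n with h0 | hpos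
  · subst h0
    have : (Finset.Nat.antidiagonalTuple 1 0).filter (fun k => ∀ i, 1 ≤ k i) = ∅ := by
      ext k
      simp only [Finset.mem_filter, Finset.Nat.mem_antidiagonalTuple, Finset.notMem_empty,
        iff_false, not_and]
      intro hsum hpos
      have h1 := hpos 0
      have h2 : k 0 = 0 := by
        have := Fin.sum_univ_one k ▸ hsum
        omega
      omega
    rw [this]
    simp
  · have : (Finset.Nat.antidiagonalTuple 1 n).filter (fun k => ∀ i, 1 ≤ k i)
        = {fun _ => n} := by
      ext k
      simp only [Finset.mem_filter, Finset.Nat.mem_antidiagonalTuple, Finset.mem_singleton,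
        Fin.sum_univ_one]
      constructor
      · rintro ⟨hk, _⟩
        funext i
        have : i = 0 := Subsingleton.elim _ _
        rw [this, hk]
      · rintro rfl
        exact ⟨rfl, fun i => hpos⟩
    rw [this]
    have hn : ¬ (n < 1 ∨ (1 % 2 = 0 ∧ n % 2 = 1)) := by omega
    rw [if_neg hn]
    simp

private lemma Acomp_rec (n r : ℕ) :
    Acomp n (r + 1) = ∑ m ∈ Finset.range n, (-1 : ℤ) ^ m * Acomp m r := by
  have hB : ∀ m : ℕ, (-1 : ℤ) ^ m * Acomp m r
      = ∑ t ∈ (Finset.Nat.antidiagonalTuple r m).filter (fun t => ∀ i, 1 ≤ t i),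
          (-1 : ℤ) ^ (∑ i ∈ Finset.univ.filter (fun i : Fin r => i.val % 2 = 0), t i) := by
    intro m
    unfold Acomp
    rw [Finset.mul_sum]
    refine Finset.sum_congr rfl ?_
    intro t ht
    simp only [Finset.mem_filter, Finset.Nat.mem_antidiagonalTuple] at ht
    obtain ⟨hsum, _⟩ := ht
    set o := ∑ i ∈ Finset.univ.filter (fun i : Fin r => i.val % 2 = 1), t i with ho
    set e := ∑ i ∈ Finset.univ.filter (fun i : Fin r => i.val % 2 = 0), t i with he
    have hoe : o + e = m := by
      rw [ho, he, ← hsum]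
      rw [← Finset.sum_filter_add_sum_filter_not Finset.univ (fun i : Fin r => i.val % 2 = 1) t]
      congr 1
      apply Finset.sum_congr _ (fun _ _ => rfl)
      apply Finset.filter_congr
      intro i _
      omega
    have hme : m + o = e + 2 * o := by omega
    calc (-1 : ℤ) ^ m * (-1) ^ o = (-1) ^ (m + o) := by rw [pow_add]
      _ = (-1) ^ (e + 2 * o) := by rw [hme]
      _ = (-1) ^ e * ((-1) ^ 2) ^ o := by rw [pow_add, pow_mul]
      _ = (-1) ^ e := by norm_num
  simp_rw [hB]
  rw [← Finset.sum_sigma (Finset.range n)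
    (fun m => (Finset.Nat.antidiagonalTuple r m).filter (fun t => ∀ i, 1 ≤ t i))
    (fun p => (-1 : ℤ) ^ (∑ i ∈ Finset.univ.filter (fun i : Fin r => i.val % 2 = 0), p.2 i))]
  unfold Acomp
  refine Finset.sum_nbij' (fun k => ⟨∑ j : Fin r, k j.succ, Fin.tail k⟩)
    (fun p => Fin.cons (n - p.1) p.2) ?_ ?_ ?_ ?_ ?_
  · intro k hk
    simp only [Finset.mem_filter, Finset.Nat.mem_antidiagonalTuple] at hk
    obtain ⟨hsum, hpos⟩ := hk
    rw [Fin.sum_univ_succ] at hsum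
    simp only [Finset.mem_sigma, Finset.mem_range, Finset.mem_filter,
      Finset.Nat.mem_antidiagonalTuple]
    refine ⟨?_, rfl, fun i => hpos i.succ⟩
    have := hpos 0
    omega
  · rintro ⟨m, t⟩ hp
    simp only [Finset.mem_sigma, Finset.mem_range, Finset.mem_filter,
      Finset.Nat.mem_antidiagonalTuple] at hp
    obtain ⟨hm, hsum, hpos⟩ := hp
    simp only [Finset.mem_filter, Finset.Nat.mem_antidiagonalTuple]
    constructor
    · rw [Fin.sum_univ_succ]
      simp only [Fin.cons_zero, Fin.cons_succ]
      omega
    · intro i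
      refine Fin.cases ?_ ?_ i
      · simp only [Fin.cons_zero]; omega
      · intro j; simp only [Fin.cons_succ]; exact hpos j
  · intro k hk
    simp only [Finset.mem_filter, Finset.Nat.mem_antidiagonalTuple] at hk
    obtain ⟨hsum, hpos⟩ := hk
    rw [Fin.sum_univ_succ] at hsum
    have h0 : n - ∑ j : Fin r, k j.succ = k 0 := by omega
    show Fin.cons (n - ∑ j : Fin r, k j.succ) (Fin.tail k) = k
    rw [h0]
    exact Fin.cons_self_tail k
  · rintro ⟨m, t⟩ hp
    simp only [Finset.mem_sigma, Finset.mem_range, Finset.mem_filter,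
      Finset.Nat.mem_antidiagonalTuple] at hp
    obtain ⟨hm, hsum, hpos⟩ := hp
    simp [Fin.cons_succ, Fin.tail_cons, hsum]
  · intro k hk
    congr 1
    rw [Finset.sum_filter, Finset.sum_filter, Fin.sum_univ_succ]
    simp only [Fin.val_zero]
    norm_num
    refine Finset.sum_congr rfl ?_
    intro j _
    by_cases h : (j : ℕ) % 2 = 0
    · rw [if_pos (by omega : ((j : ℕ) + 1) % 2 = 1), if_pos h]
      rfl
    · rw [if_neg (by omega : ¬ ((j : ℕ) + 1) % 2 = 1), if_neg h]

private lemma ccomp_key (n r : ℕ) (hr : 1 ≤ r) :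
    ccomp (n + 1) (r + 1) = ccomp n (r + 1) + (-1 : ℤ) ^ n * ccomp n r := by
  unfold ccomp
  obtain ⟨b, hb⟩ : ∃ b, r = 2 * b ∨ r = 2 * b + 1 := ⟨r / 2, by omega⟩
  obtain ⟨m, hm⟩ : ∃ m, n = 2 * m ∨ n = 2 * m + 1 := ⟨n / 2, by omega⟩
  have hpow1 : (-1 : ℤ) ^ (2 * m) = 1 := by rw [pow_mul]; norm_num
  have hpow2 : (-1 : ℤ) ^ (2 * m + 1) = -1 := by rw [pow_succ, pow_mul]; norm_num
  rcases hb with rfl | rfl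
  · -- r = 2b even, b ≥ 1
    have hb1 : 1 ≤ b := by omega
    rcases hm with rfl | rfl
    · -- n = 2m : Pascal case
      have c1 : (2 * m + 1 < 2 * b + 1 ∨ ((2 * b + 1) % 2 = 0 ∧ (2 * m + 1) % 2 = 1))
          ↔ m < b := by omega
      have c2 : (2 * m < 2 * b + 1 ∨ ((2 * b + 1) % 2 = 0 ∧ (2 * m) % 2 = 1))
          ↔ m < b + 1 := by omega
      have c3 : (2 * m < 2 * b ∨ ((2 * b) % 2 = 0 ∧ (2 * m) % 2 = 1)) ↔ m < b := by omega
      rw [if_congr c1 rfl rfl, if_congr c2 rfl rfl, if_congr c3 rfl rfl]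
      have h1 : (2 * b + 1) / 2 = b := by omega
      have h2 : (2 * b + 1 - 1) / 2 = b := by omega
      have h3 : (2 * b) / 2 = b := by omega
      have h4 : (2 * b - 1) / 2 = b - 1 := by omega
      have h5 : (2 * m + 1 - 1) / 2 = m := by omega
      have h6 : (2 * m - 1) / 2 = m - 1 := by omega
      rw [h1, h2, h3, h4, h5, h6, hpow1, one_mul]
      rcases lt_or_ge m b with h | h
      · rw [if_pos h, if_pos (by omega), if_pos h]; ring
      rcases eq_or_lt_of_le h with heq | h'
      · subst heq
        rw [if_neg (by omega), if_pos (by omega), if_neg (by omega)]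
        rw [Nat.choose_self, Nat.choose_self]
        ring
      · rw [if_neg (by omega), if_neg (by omega), if_neg (by omega)]
        have hm1 : 1 ≤ m := by omega
        have pascal : m.choose b = (m - 1).choose (b - 1) + (m - 1).choose b := by
          have e1 : m = (m - 1) + 1 := by omega
          have e2 : b = (b - 1) + 1 := by omega
          rw [e1, e2, Nat.succ_sub_one, Nat.succ_sub_one]
          exact Nat.choose_succ_succ (m - 1) (b - 1)
        rw [pascal]
        push_cast
        ring
    · -- n = 2m+1 : columns match
      have c1 : (2 * m + 1 + 1 < 2 * b + 1 ∨ ((2 * b + 1) % 2 = 0 ∧ (2 * m + 1 + 1) % 2 = 1))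
          ↔ m < b := by omega
      have c2 : (2 * m + 1 < 2 * b + 1 ∨ ((2 * b + 1) % 2 = 0 ∧ (2 * m + 1) % 2 = 1))
          ↔ m < b := by omega
      have c3 : (2 * m + 1 < 2 * b ∨ ((2 * b) % 2 = 0 ∧ (2 * m + 1) % 2 = 1)) ↔ True := by
        simp only [iff_true]; omega
      rw [if_congr c1 rfl rfl, if_congr c2 rfl rfl, if_congr c3 rfl rfl, if_pos trivial]
      have h1 : (2 * b + 1 - 1) / 2 = b := by omega
      have h2 : (2 * m + 1 + 1 - 1) / 2 = m := by omega
      have h3 : (2 * m + 1 - 1) / 2 = m := by omega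
      rw [h1, h2, h3]
      ring
  · -- r = 2b+1 odd
    rcases hm with rfl | rfl
    · -- n = 2m : LHS 0, RHS terms cancel
      have c1 : (2 * m + 1 < 2 * b + 1 + 1 ∨ ((2 * b + 1 + 1) % 2 = 0 ∧ (2 * m + 1) % 2 = 1))
          ↔ True := by simp only [iff_true]; omega
      have c2 : (2 * m < 2 * b + 1 + 1 ∨ ((2 * b + 1 + 1) % 2 = 0 ∧ (2 * m) % 2 = 1))
          ↔ m < b + 1 := by omega
      have c3 : (2 * m < 2 * b + 1 ∨ ((2 * b + 1) % 2 = 0 ∧ (2 * m) % 2 = 1))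
          ↔ m < b + 1 := by omega
      rw [if_congr c1 rfl rfl, if_congr c2 rfl rfl, if_congr c3 rfl rfl, if_pos trivial]
      have h1 : (2 * b + 1 + 1) / 2 = b + 1 := by omega
      have h2 : (2 * b + 1 + 1 - 1) / 2 = b := by omega
      have h3 : (2 * b + 1) / 2 = b := by omega
      have h4 : (2 * b + 1 - 1) / 2 = b := by omega
      have h5 : (2 * m - 1) / 2 = m - 1 := by omega
      rw [h1, h2, h3, h4, h5, hpow1, one_mul]
      rcases lt_or_ge m (b + 1) with h | h
      · rw [if_pos h, if_pos h]; ring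
      · rw [if_neg (by omega), if_neg (by omega)]; ring
    · -- n = 2m+1
      have c1 : (2 * m + 1 + 1 < 2 * b + 1 + 1 ∨ ((2 * b + 1 + 1) % 2 = 0 ∧ (2 * m + 1 + 1) % 2 = 1))
          ↔ m < b := by omega
      have c2 : (2 * m + 1 < 2 * b + 1 + 1 ∨ ((2 * b + 1 + 1) % 2 = 0 ∧ (2 * m + 1) % 2 = 1))
          ↔ True := by simp only [iff_true]; omega
      have c3 : (2 * m + 1 < 2 * b + 1 ∨ ((2 * b + 1) % 2 = 0 ∧ (2 * m + 1) % 2 = 1))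
          ↔ m < b := by omega
      rw [if_congr c1 rfl rfl, if_congr c2 rfl rfl, if_congr c3 rfl rfl, if_pos trivial]
      have h1 : (2 * b + 1 + 1) / 2 = b + 1 := by omega
      have h3 : (2 * b + 1 + 1 - 1) / 2 = b := by omega
      have h4 : (2 * b + 1) / 2 = b := by omega
      have h5 : (2 * b + 1 - 1) / 2 = b := by omega
      have h6 : (2 * m + 1 + 1 - 1) / 2 = m := by omega
      have h7 : (2 * m + 1 - 1) / 2 = m := by omega
      rw [h1, h3, h4, h5, h6, h7, hpow2]
      rcases lt_or_ge m b with h | h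
      · rw [if_pos h, if_pos h]; ring
      · rw [if_neg (by omega), if_neg (by omega)]; ring

private lemma sum_ccomp (r : ℕ) (hr : 1 ≤ r) (n : ℕ) :
    ∑ m ∈ Finset.range n, (-1 : ℤ) ^ m * ccomp m r = ccomp n (r + 1) := by
  induction n with
  | zero =>
    simp only [Finset.range_zero, Finset.sum_empty]
    unfold ccomp
    rw [if_pos (Or.inl (by omega))]
  | succ n ih =>
    rw [Finset.sum_range_succ, ih, ccomp_key n r hr]

private lemma Acomp_eq (r : ℕ) (hr : 1 ≤ r) (n : ℕ) : Acomp n r = ccomp n r := by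
  induction r generalizing n with
  | zero => omega
  | succ r ih =>
    rcases Nat.eq_zero_or_pos r with rfl | hr'
    · exact Acomp_one n
    · rw [Acomp_rec, ← sum_ccomp r hr' n]
      exact Finset.sum_congr rfl fun m _ => by rw [ih hr' m]

/-- For even `n = 2l` and `1 ≤ r ≤ n`, the sum over all tuples `(k₁,...,k_r)` of
positive integers with `k₁ + ⋯ + k_r = n` of `(-1)^(k₂ + k₄ + ⋯ + k_{2⌊r/2⌋})`
(the sum of the entries in even positions) equals `(-1)^⌊r/2⌋ * binom (l-1) ⌊(r-1)/2⌋`.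
(When `r = 1` the empty exponent gives `(-1)^0 = 1` for the unique tuple `(n)`.) -/
theorem stmt0 (l r : ℕ) (hl : 1 ≤ l) (hr1 : 1 ≤ r) (hrn : r ≤ 2 * l) :
    ∑ k ∈ (Finset.Nat.antidiagonalTuple r (2 * l)).filter (fun k => ∀ i, 1 ≤ k i),
        (-1 : ℤ) ^ (∑ i ∈ Finset.univ.filter (fun i : Fin r => i.val % 2 = 1), k i)
      = (-1 : ℤ) ^ (r / 2) * ((l - 1).choose ((r - 1) / 2)) := by
  have h := Acomp_eq r hr1 (2 * l)
  unfold Acomp at h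
  rw [h]
  clear h
  unfold ccomp
  rw [if_neg (by omega : ¬(2 * l < r ∨ (r % 2 = 0 ∧ (2 * l) % 2 = 1)))]
  have hd : (2 * l - 1) / 2 = l - 1 := by omega
  rw [hd]
end

section
/- For s ≥ 1 and even n = 2l with n ≥ 2s, one has ∑_{u=s}^{n-s} (-1)^{u+s} binom(u-1, s-1) binom(n-u-1, s-1) = binom(l-1, s-1). -/
open Finset

/-- `S r N = ∑_{a=0}^N (-1)^a C(r+a,a) C(r+N-a, N-a)`. -/
private def SS (r N : ℕ) : ℤ :=
  ∑ a ∈ Finset.range (N + 1),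
    (-1) ^ a * ((r + a).choose a) * ((r + (N - a)).choose (N - a))

private def TT (r N : ℕ) : ℤ :=
  ∑ a ∈ Finset.range (N + 1),
    (-1) ^ a * ((r + a).choose a) * ((r + 1 + (N - a)).choose (N - a))

private def TT' (r N : ℕ) : ℤ :=
  ∑ a ∈ Finset.range (N + 1),
    (-1) ^ a * ((r + 1 + a).choose a) * ((r + (N - a)).choose (N - a))

private lemma SS_zero (r : ℕ) : SS r 0 = 1 := by simp [SS]

private lemma SS_zero_left (N : ℕ) :
    SS 0 N = if Even (N + 1) then 0 else 1 := by
  have : SS 0 N = ∑ a ∈ Finset.range (N + 1), (-1 : ℤ) ^ a := by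
    unfold SS
    refine Finset.sum_congr rfl fun a _ => by simp
  rw [this, neg_one_geom_sum]

/-- Lemma A: Pascal on the first factor. -/
private lemma lemA (r N : ℕ) :
    SS (r + 1) (N + 1) + SS (r + 1) N = TT r (N + 1) := by
  unfold SS TT
  rw [Finset.sum_range_succ' (fun a => (-1 : ℤ) ^ a * ((r + 1 + a).choose a) *
        ((r + 1 + (N + 1 - a)).choose (N + 1 - a))) (N + 1),
      Finset.sum_range_succ' (fun a => (-1 : ℤ) ^ a * ((r + a).choose a) *
        ((r + 1 + (N + 1 - a)).choose (N + 1 - a))) (N + 1)]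
  rw [add_right_comm, ← Finset.sum_add_distrib]
  congr 1
  · refine Finset.sum_congr rfl fun a ha => ?_
    have h1 : N + 1 - (a + 1) = N - a := by omega
    have h2 : r + 1 + (a + 1) = (r + 1 + a) + 1 := by omega
    have h3 : r + (a + 1) = r + 1 + a := by omega
    rw [h1, h2, h3, Nat.choose_succ_succ (r + 1 + a) a]
    push_cast
    ring
  · norm_num

/-- Lemma B: Pascal on the second factor. -/
private lemma lemB (r N : ℕ) :
    SS (r + 1) (N + 1) = TT' r (N + 1) + SS (r + 1) N := by
  unfold SS TT'
  rw [Finset.sum_range_succ (fun a => (-1 : ℤ) ^ a * ((r + 1 + a).choose a) *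
        ((r + 1 + (N + 1 - a)).choose (N + 1 - a))) (N + 1),
      Finset.sum_range_succ (fun a => (-1 : ℤ) ^ a * ((r + 1 + a).choose a) *
        ((r + (N + 1 - a)).choose (N + 1 - a))) (N + 1)]
  have hcong : ∑ a ∈ Finset.range (N + 1),
        (-1 : ℤ) ^ a * ((r + 1 + a).choose a) * ((r + 1 + (N + 1 - a)).choose (N + 1 - a))
      = ∑ a ∈ Finset.range (N + 1),
        ((-1 : ℤ) ^ a * ((r + 1 + a).choose a) * ((r + (N + 1 - a)).choose (N + 1 - a))
          + (-1 : ℤ) ^ a * ((r + 1 + a).choose a) * ((r + 1 + (N - a)).choose (N - a))) := by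
    refine Finset.sum_congr rfl fun a ha => ?_
    have ha' : a ≤ N := by simpa [Nat.lt_succ_iff] using ha
    have h1 : N + 1 - a = (N - a) + 1 := by omega
    have h2 : r + 1 + ((N - a) + 1) = (r + 1 + (N - a)) + 1 := by omega
    have h3 : r + ((N - a) + 1) = r + 1 + (N - a) := by omega
    rw [h1, h2, Nat.choose_succ_succ (r + 1 + (N - a)) (N - a), h3]
    push_cast
    ring
  rw [hcong, Finset.sum_add_distrib]
  simp only [Nat.sub_self, Nat.add_zero, Nat.choose_zero_right, Nat.cast_one]
  ring

/-- Lemma C: reversal. -/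
private lemma lemC (r N : ℕ) : TT' r N = (-1) ^ N * TT r N := by
  unfold TT' TT
  rw [← Finset.sum_range_reflect (fun a => (-1 : ℤ) ^ a * ((r + 1 + a).choose a) *
        ((r + (N - a)).choose (N - a))) (N + 1)]
  rw [Finset.mul_sum]
  refine Finset.sum_congr rfl fun a ha => ?_
  have ha' : a ≤ N := by simpa [Nat.lt_succ_iff] using ha
  have h1 : N + 1 - 1 - a = N - a := by omega
  have h2 : N - (N - a) = a := by omega
  have key : (-1 : ℤ) ^ (N - a) = (-1) ^ N * (-1) ^ a := by
    have e1 : (-1 : ℤ) ^ (N - a) * (-1) ^ a = (-1) ^ N := by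
      rw [← pow_add, Nat.sub_add_cancel ha']
    have e2 : ((-1 : ℤ) ^ a) * ((-1) ^ a) = 1 := by
      rw [← pow_add, ← two_mul, pow_mul]; norm_num
    calc (-1 : ℤ) ^ (N - a) = (-1) ^ (N - a) * ((-1) ^ a * (-1) ^ a) := by
          rw [e2, mul_one]
      _ = (-1) ^ N * (-1) ^ a := by rw [← mul_assoc, e1]
  simp only [h1, h2]
  rw [key]
  ring

/-- Lemma D: Pascal on the second factor of `TT`. -/
private lemma lemD (r N : ℕ) :
    TT r (N + 1) = SS r (N + 1) + TT r N := by
  unfold SS TT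
  rw [Finset.sum_range_succ (fun a => (-1 : ℤ) ^ a * ((r + a).choose a) *
        ((r + 1 + (N + 1 - a)).choose (N + 1 - a))) (N + 1),
      Finset.sum_range_succ (fun a => (-1 : ℤ) ^ a * ((r + a).choose a) *
        ((r + (N + 1 - a)).choose (N + 1 - a))) (N + 1)]
  have hcong : ∑ a ∈ Finset.range (N + 1),
        (-1 : ℤ) ^ a * ((r + a).choose a) * ((r + 1 + (N + 1 - a)).choose (N + 1 - a))
      = ∑ a ∈ Finset.range (N + 1),
        ((-1 : ℤ) ^ a * ((r + a).choose a) * ((r + (N + 1 - a)).choose (N + 1 - a))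
          + (-1 : ℤ) ^ a * ((r + a).choose a) * ((r + 1 + (N - a)).choose (N - a))) := by
    refine Finset.sum_congr rfl fun a ha => ?_
    have ha' : a ≤ N := by simpa [Nat.lt_succ_iff] using ha
    have h1 : N + 1 - a = (N - a) + 1 := by omega
    have h2 : r + 1 + ((N - a) + 1) = (r + 1 + (N - a)) + 1 := by omega
    have h3 : r + ((N - a) + 1) = r + 1 + (N - a) := by omega
    rw [h1, h2, Nat.choose_succ_succ (r + 1 + (N - a)) (N - a), h3]
    push_cast
    ring
  rw [hcong, Finset.sum_add_distrib]
  simp only [Nat.sub_self, Nat.add_zero, Nat.choose_zero_right, Nat.cast_one]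
  ring

/-- Odd sums vanish. -/
private lemma SS_odd (r k : ℕ) : SS r (2 * k + 1) = 0 := by
  cases r with
  | zero =>
      rw [SS_zero_left]
      simp [Nat.even_add_one, parity_simps]
  | succ r =>
      have hA := lemA r (2 * k)
      have hB := lemB r (2 * k)
      have hC := lemC r (2 * k + 1)
      rw [hC] at hB
      have : (-1 : ℤ) ^ (2 * k + 1) = -1 := by
        rw [pow_succ, pow_mul]; norm_num
      rw [this] at hB
      linarith [hA, hB]

/-- Main evaluation: `SS r (2k) = C(r+k, k)`. -/
private lemma SS_even (r k : ℕ) : SS r (2 * k) = (r + k).choose k := by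
  induction r generalizing k with
  | zero =>
      rw [SS_zero_left]
      simp [Nat.even_add_one, parity_simps]
  | succ r ih =>
      induction k with
      | zero => simp [SS_zero]
      | succ k ihk =>
          have hA := lemA r (2 * k + 1)
          have hodd1 : SS (r + 1) (2 * k + 1 + 1 + 1) = 0 := by
            have := SS_odd (r + 1) (k + 1)
            simpa [Nat.mul_succ, mul_add] using this
          have hodd : SS (r + 1) (2 * k + 1) = 0 := SS_odd (r + 1) k
          have hD := lemD r (2 * k + 1)
          have hA2 := lemA r (2 * k)
          have hSr : SS r (2 * k + 1 + 1) = ((r + (k + 1)).choose (k + 1) : ℤ) := by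
            have h := ih (k + 1)
            have e : 2 * (k + 1) = 2 * k + 1 + 1 := by ring
            rwa [e] at h
          have hSS : SS (r + 1) (2 * k) = ((r + 1 + k).choose k : ℤ) := by
            have e : 2 * k = 2 * k := rfl
            exact ihk
          have e2 : 2 * (k + 1) = 2 * k + 1 + 1 := by ring
          rw [e2]
          have hch : ((r + 1 + (k + 1)).choose (k + 1) : ℤ)
              = ((r + (k + 1)).choose (k + 1) : ℤ) + ((r + 1 + k).choose k : ℤ) := by
            have h3 : r + 1 + (k + 1) = (r + k + 1) + 1 := by omega
            have h4 : r + (k + 1) = r + k + 1 := by omega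
            have h5 : r + 1 + k = r + k + 1 := by omega
            rw [h3, h4, h5, Nat.choose_succ_succ (r + k + 1) k]
            push_cast
            ring
          rw [hch]
          -- hA : SS (r+1) (2k+2) + SS (r+1) (2k+1) = TT r (2k+2)
          -- hD : TT r (2k+2) = SS r (2k+2) + TT r (2k+1)
          -- hA2 : SS (r+1) (2k+1) + SS (r+1) (2k) = TT r (2k+1)
          rw [← hSr, ← hSS]
          linarith [hA, hD, hA2, hodd]

/-- For `s ≥ 1` and even `n = 2l` with `n ≥ 2s`,
`∑_{u=s}^{n-s} (-1)^{u+s} binom(u-1, s-1) binom(n-u-1, s-1) = binom(l-1, s-1)`. -/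
theorem stmt1 (s l : ℕ) (hs : 1 ≤ s) (hn : 2 * s ≤ 2 * l) :
    ∑ u ∈ Finset.Icc s (2 * l - s),
        (-1 : ℤ) ^ (u + s) * ((u - 1).choose (s - 1)) * ((2 * l - u - 1).choose (s - 1))
      = ((l - 1).choose (s - 1)) := by
  have hsl : s ≤ l := by omega
  have key := SS_even (s - 1) (l - s)
  have hmain : ∑ u ∈ Finset.Icc s (2 * l - s),
      (-1 : ℤ) ^ (u + s) * ((u - 1).choose (s - 1)) * ((2 * l - u - 1).choose (s - 1))
      = SS (s - 1) (2 * (l - s)) := by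
    unfold SS
    refine Finset.sum_nbij' (fun u => u - s) (fun a => a + s) ?_ ?_ ?_ ?_ ?_
    · intro u hu
      simp only [Finset.mem_Icc] at hu
      simp only [Finset.mem_range]
      omega
    · intro a ha
      simp only [Finset.mem_range] at ha
      simp only [Finset.mem_Icc]
      omega
    · intro u hu; simp only [Finset.mem_Icc] at hu; omega
    · intro a ha; simp only [Finset.mem_range] at ha; omega
    · intro u hu
      simp only [Finset.mem_Icc] at hu
      have h1 : u + s = (u - s) + 2 * s := by omega
      have hsign : (-1 : ℤ) ^ (u + s) = (-1) ^ (u - s) := by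
        rw [h1, pow_add, pow_mul]
        norm_num
      have h2 : u - 1 = (s - 1) + (u - s) := by omega
      have h3 : (u - 1).choose (s - 1) = ((s - 1) + (u - s)).choose (u - s) := by
        rw [← h2]
        have : u - s = (u - 1) - (s - 1) := by omega
        rw [this, Nat.choose_symm (by omega)]
      have h4 : 2 * l - u - 1 = (s - 1) + (2 * (l - s) - (u - s)) := by omega
      have h5 : (2 * l - u - 1).choose (s - 1)
          = ((s - 1) + (2 * (l - s) - (u - s))).choose (2 * (l - s) - (u - s)) := by
        rw [← h4]
        have : 2 * (l - s) - (u - s) = (2 * l - u - 1) - (s - 1) := by omega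
        rw [this, Nat.choose_symm (by omega)]
      rw [hsign, h3, h5]
  rw [hmain, key]
  have h6 : s - 1 + (l - s) = l - 1 := by omega
  rw [h6]
  have h7 : l - s = (l - 1) - (s - 1) := by omega
  rw [h7, Nat.choose_symm (by omega)]
end

section
/- For s ≥ 0 and even n = 2l with n ≥ 2s+2, one has ∑_{u=s}^{n-s-1} (-1)^{u+s} binom(u-1, s-1) binom(n-u-1, s) = binom(l-1, s). -/
open Finset

/-- Auxiliary alternating convolution sum. -/
def auxE (a b m : ℕ) : ℤ :=
  ∑ k ∈ Finset.range (m + 1),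
    (-1 : ℤ) ^ k * ((a + k).choose k : ℤ) * ((b + (m - k)).choose (m - k) : ℤ)

lemma auxE_zero (a b : ℕ) : auxE a b 0 = 1 := by
  simp [auxE]

/-- Pascal recurrence on the second factor. -/
lemma auxE_pasc2 (a b m : ℕ) :
    auxE a (b + 1) (m + 1) = auxE a b (m + 1) + auxE a (b + 1) m := by
  unfold auxE
  rw [Finset.sum_range_succ, Finset.sum_range_succ
    (f := fun k => (-1 : ℤ) ^ k * ((a + k).choose k : ℤ) * ((b + (m + 1 - k)).choose (m + 1 - k) : ℤ))]
  have key : ∀ k ∈ Finset.range (m + 1),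
      (-1 : ℤ) ^ k * ((a + k).choose k : ℤ) * ((b + 1 + (m + 1 - k)).choose (m + 1 - k) : ℤ)
      = (-1 : ℤ) ^ k * ((a + k).choose k : ℤ) * ((b + (m + 1 - k)).choose (m + 1 - k) : ℤ)
      + (-1 : ℤ) ^ k * ((a + k).choose k : ℤ) * ((b + 1 + (m - k)).choose (m - k) : ℤ) := by
    intro k hk
    have hk' : k ≤ m := Nat.lt_succ_iff.mp (Finset.mem_range.mp hk)
    have hj : m + 1 - k = (m - k) + 1 := by omega
    rw [hj]
    have hP : (b + 1 + ((m - k) + 1)).choose ((m - k) + 1)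
        = (b + ((m - k) + 1)).choose ((m - k) + 1) + (b + 1 + (m - k)).choose (m - k) := by
      rw [show b + 1 + ((m - k) + 1) = (b + (m - k) + 1) + 1 by ring,
        Nat.choose_succ_succ]
      rw [show b + ((m - k) + 1) = b + (m - k) + 1 by ring,
        show b + 1 + (m - k) = b + (m - k) + 1 by ring]
      ring
    have hPZ := congrArg (fun n : ℕ => (n : ℤ)) hP
    push_cast at hPZ
    rw [hPZ]
    ring
  rw [Finset.sum_congr rfl key, Finset.sum_add_distrib]
  simp [Nat.sub_self]
  ring

/-- Pascal recurrence on the first factor. -/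
lemma auxE_pasc1 (a b m : ℕ) :
    auxE a b (m + 1) = auxE (a + 1) b (m + 1) + auxE (a + 1) b m := by
  unfold auxE
  rw [Finset.sum_range_succ', Finset.sum_range_succ'
    (f := fun k => (-1 : ℤ) ^ k * ((a + 1 + k).choose k : ℤ) * ((b + (m + 1 - k)).choose (m + 1 - k) : ℤ))]
  have key : ∀ k ∈ Finset.range (m + 1),
      (-1 : ℤ) ^ (k + 1) * ((a + (k + 1)).choose (k + 1) : ℤ)
          * ((b + (m + 1 - (k + 1))).choose (m + 1 - (k + 1)) : ℤ)
      = (-1 : ℤ) ^ (k + 1) * ((a + 1 + (k + 1)).choose (k + 1) : ℤ)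
          * ((b + (m + 1 - (k + 1))).choose (m + 1 - (k + 1)) : ℤ)
      + (-1 : ℤ) ^ k * ((a + 1 + k).choose k : ℤ) * ((b + (m - k)).choose (m - k) : ℤ) := by
    intro k hk
    have hj : m + 1 - (k + 1) = m - k := by omega
    rw [hj]
    have hP : (a + 1 + (k + 1)).choose (k + 1)
        = (a + 1 + k).choose k + (a + (k + 1)).choose (k + 1) := by
      rw [show a + 1 + (k + 1) = (a + k + 1) + 1 by ring, Nat.choose_succ_succ]
      rw [show a + 1 + k = a + k + 1 by ring, show a + (k + 1) = a + k + 1 by ring]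
    have hPZ := congrArg (fun n : ℕ => (n : ℤ)) hP
    push_cast at hPZ
    rw [hPZ]
    ring
  rw [Finset.sum_congr rfl key, Finset.sum_add_distrib]
  simp
  ring

lemma auxE_diag (t : ℕ) : ∀ m : ℕ,
    auxE t t m = if Even m then ((t + m / 2).choose (m / 2) : ℤ) else 0 := by
  induction t with
  | zero =>
    intro m
    have h1 : auxE 0 0 m = ∑ k ∈ Finset.range (m + 1), (-1 : ℤ) ^ k := by
      unfold auxE
      refine Finset.sum_congr rfl fun k _ => ?_
      simp [Nat.choose_self]
    rw [h1, neg_one_geom_sum]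
    rcases Nat.even_or_odd m with he | ho
    · simp [Nat.even_add_one, he, Nat.choose_self]
    · simp [Nat.even_add_one, Nat.not_even_iff_odd.mpr ho, Nat.not_odd_iff_even, ho]
  | succ t ih =>
    have V2 : ∀ m : ℕ, auxE (t + 1) t m = (-1 : ℤ) ^ m * ((t + 1 + m / 2).choose (m / 2) : ℤ) := by
      intro m
      induction m with
      | zero => simp [auxE_zero]
      | succ m ihm =>
        have h := auxE_pasc1 t t m
        have h2 : auxE (t + 1) t (m + 1) = auxE t t (m + 1) - auxE (t + 1) t m := by
          rw [h]; ring
        rw [h2, ih (m + 1), ihm]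
        rcases Nat.even_or_odd m with he | ho
        · obtain ⟨j, rfl⟩ := he
          have e1 : ¬ Even (j + j + 1) := by simp [Nat.even_add_one, Nat.even_add]
          have e2 : (j + j + 1) / 2 = j := by omega
          have e3 : (j + j) / 2 = j := by omega
          rw [if_neg e1, e2, e3]
          have : (-1 : ℤ) ^ (j + j + 1) = -(-1 : ℤ) ^ (j + j) := by
            rw [pow_succ]; ring
          rw [this]
          ring
        · obtain ⟨j, rfl⟩ := ho
          have e1 : Even (2 * j + 1 + 1) := by exact ⟨j + 1, by ring⟩
          have e2 : (2 * j + 1 + 1) / 2 = j + 1 := by omega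
          have e3 : (2 * j + 1) / 2 = j := by omega
          rw [if_pos e1, e2, e3]
          have hP : (t + 1 + (j + 1)).choose (j + 1)
              = (t + 1 + j).choose j + (t + (j + 1)).choose (j + 1) := by
            rw [show t + 1 + (j + 1) = (t + j + 1) + 1 by ring, Nat.choose_succ_succ]
            rw [show t + 1 + j = t + j + 1 by ring, show t + (j + 1) = t + j + 1 by ring]
          have hPZ := congrArg (fun n : ℕ => (n : ℤ)) hP
          push_cast at hPZ
          have hs1 : (-1 : ℤ) ^ (2 * j + 1) = -1 := by
            rw [pow_succ, pow_mul]; norm_num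
          have hs2 : (-1 : ℤ) ^ (2 * j + 1 + 1) = 1 := by
            rw [pow_succ, hs1]; ring
          rw [hs1, hs2, hPZ]
          ring
    intro m
    induction m with
    | zero => simp [auxE_zero]
    | succ m ihm =>
      rw [auxE_pasc2 (t + 1) t m, V2 (m + 1), ihm]
      rcases Nat.even_or_odd m with he | ho
      · obtain ⟨j, rfl⟩ := he
        have e1 : ¬ Even (j + j + 1) := by simp [Nat.even_add_one, Nat.even_add]
        have e2 : (j + j + 1) / 2 = j := by omega
        have e3 : (j + j) / 2 = j := by omega
        have hEv : Even (j + j) := ⟨j, rfl⟩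
        rw [if_neg e1, if_pos hEv, e2, e3]
        have : (-1 : ℤ) ^ (j + j + 1) = -(-1 : ℤ) ^ (j + j) := by rw [pow_succ]; ring
        rw [this]
        have : (-1 : ℤ) ^ (j + j) = 1 := by
          rw [show j + j = 2 * j by ring, pow_mul]; norm_num
        rw [this]
        ring
      · obtain ⟨j, rfl⟩ := ho
        have e1 : Even (2 * j + 1 + 1) := ⟨j + 1, by ring⟩
        have e2 : (2 * j + 1 + 1) / 2 = j + 1 := by omega
        have e3 : ¬ Even (2 * j + 1) := by simp [Nat.even_add_one]
        rw [if_pos e1, if_neg e3, e2]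
        have hs2 : (-1 : ℤ) ^ (2 * j + 1 + 1) = 1 := by
          rw [pow_succ, pow_succ, pow_mul]; norm_num
        rw [hs2]
        ring

lemma auxE_main (t : ℕ) : ∀ m : ℕ,
    auxE t (t + 1) m = ((t + 1 + m / 2).choose (m / 2) : ℤ) := by
  intro m
  induction m with
  | zero => simp [auxE_zero]
  | succ m ihm =>
    rw [auxE_pasc2 t t m, auxE_diag t (m + 1), ihm]
    rcases Nat.even_or_odd m with he | ho
    · obtain ⟨j, rfl⟩ := he
      have e1 : ¬ Even (j + j + 1) := by simp [Nat.even_add_one, Nat.even_add]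
      have e2 : (j + j + 1) / 2 = j := by omega
      have e3 : (j + j) / 2 = j := by omega
      rw [if_neg e1, e2, e3]
      ring
    · obtain ⟨j, rfl⟩ := ho
      have e1 : Even (2 * j + 1 + 1) := ⟨j + 1, by ring⟩
      have e2 : (2 * j + 1 + 1) / 2 = j + 1 := by omega
      have e3 : (2 * j + 1) / 2 = j := by omega
      rw [if_pos e1, e2, e3]
      have hP : (t + 1 + (j + 1)).choose (j + 1)
          = (t + 1 + j).choose j + (t + (j + 1)).choose (j + 1) := by
        rw [show t + 1 + (j + 1) = (t + j + 1) + 1 by ring, Nat.choose_succ_succ]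
        rw [show t + 1 + j = t + j + 1 by ring, show t + (j + 1) = t + j + 1 by ring]
      have hPZ := congrArg (fun n : ℕ => (n : ℤ)) hP
      push_cast at hPZ
      rw [hPZ]
      ring

/-- For `s ≥ 0` and even `n = 2l` with `n ≥ 2s + 2`,
`∑_{u=s}^{n-s-1} (-1)^{u+s} binom(u-1, s-1) binom(n-u-1, s) = binom(l-1, s)`,
with the convention `binom(u-1, -1) = [u = 0]` when `s = 0`. -/
theorem stmt2 (s l : ℕ) (hn : 2 * s + 2 ≤ 2 * l) :
    ∑ u ∈ Finset.Icc s (2 * l - s - 1),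
        (-1 : ℤ) ^ (u + s) *
          (if s = 0 then (if u = 0 then 1 else 0) else ((u - 1).choose (s - 1) : ℤ)) *
          ((2 * l - u - 1).choose s)
      = ((l - 1).choose s) := by
  cases s with
  | zero =>
    have hl : 1 ≤ l := by omega
    rw [Finset.sum_eq_single 0]
    · simp
    · intro u hu hu0
      simp [hu0]
    · intro h0
      exfalso
      exact h0 (Finset.mem_Icc.mpr ⟨Nat.zero_le _, by omega⟩)
  | succ t =>
    have hl : t + 2 ≤ l := by omega
    set m : ℕ := 2 * l - 2 * t - 3 with hm
    rw [← Finset.Ico_add_one_right_eq_Icc, Finset.sum_Ico_eq_sum_range]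
    rw [show 2 * l - (t + 1) - 1 + 1 - (t + 1) = m + 1 by omega]
    have key : ∀ k ∈ Finset.range (m + 1),
        (-1 : ℤ) ^ (t + 1 + k + (t + 1)) *
          (if t + 1 = 0 then (if t + 1 + k = 0 then 1 else 0)
            else ((t + 1 + k - 1).choose (t + 1 - 1) : ℤ)) *
          ((2 * l - (t + 1 + k) - 1).choose (t + 1) : ℤ)
        = (-1 : ℤ) ^ k * ((t + k).choose k : ℤ) * ((t + 1 + (m - k)).choose (m - k) : ℤ) := by
      intro k hk
      have hk' : k ≤ m := Nat.lt_succ_iff.mp (Finset.mem_range.mp hk)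
      rw [if_neg (Nat.succ_ne_zero t)]
      have hsgn : (-1 : ℤ) ^ (t + 1 + k + (t + 1)) = (-1 : ℤ) ^ k := by
        rw [show t + 1 + k + (t + 1) = k + 2 * (t + 1) by ring, pow_add, pow_mul]
        norm_num
      have hc1 : (t + 1 + k - 1).choose (t + 1 - 1) = (t + k).choose k := by
        rw [show t + 1 + k - 1 = t + k by omega, show t + 1 - 1 = t by omega]
        rw [← Nat.choose_symm (Nat.le_add_right t k), show t + k - t = k by omega]
      have hc2 : (2 * l - (t + 1 + k) - 1).choose (t + 1) = (t + 1 + (m - k)).choose (m - k) := by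
        rw [show 2 * l - (t + 1 + k) - 1 = t + 1 + (m - k) by omega]
        rw [← Nat.choose_symm (Nat.le_add_right (t + 1) (m - k)),
          show t + 1 + (m - k) - (t + 1) = m - k by omega]
      rw [hsgn, hc1, hc2]
    rw [Finset.sum_congr rfl key]
    have hE : (∑ k ∈ Finset.range (m + 1),
        (-1 : ℤ) ^ k * ((t + k).choose k : ℤ) * ((t + 1 + (m - k)).choose (m - k) : ℤ))
        = auxE t (t + 1) m := rfl
    rw [hE, auxE_main t m]
    have hm2 : m / 2 = l - t - 2 := by omega
    rw [hm2, show t + 1 + (l - t - 2) = l - 1 by omega]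
    rw [← Nat.choose_symm (show t + 1 ≤ l - 1 by omega), show l - 1 - (t + 1) = l - t - 2 by omega]
end

section
/- Let x₁, x₂ be Boolean independent in (A, φ) and g = a x₁x₂ + b x₂x₁ for complex a, b. Then the Boolean cumulants of g are: βₙ(g) = ab(β₂(x₁)β₁(x₂)² + β₂(x₂)β₁(x₁)²)(ab β₂(x₁)β₂(x₂))^{(n−2)/2} for n even, and βₙ(g) = (a+b) β₁(x₁)β₁(x₂) (ab β₂(x₁)β₂(x₂))^{(n−1)/2} for n odd. -/
open Finset
open scoped Classical

/-- Partitions of `{1, ..., n}` (modelled as finpartitions of `Finset.univ : Finset (Fin n)`). -/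
abbrev FP (n : ℕ) := Finpartition (Finset.univ : Finset (Fin n))

/-- A partition is an interval partition if each of its blocks is an interval. -/
def IsIntervalPart {n : ℕ} (P : FP n) : Prop :=
  ∀ B ∈ P.parts, ∀ a b c : Fin n, a ∈ B → c ∈ B → a ≤ b → b ≤ c → b ∈ B

/-- The set `I(n)` of interval partitions of `[n]`. -/
noncomputable def intSet (n : ℕ) : Finset (FP n) := Finset.univ.filter IsIntervalPart

/-- The tuple `a` restricted to the block `B`, listed in increasing order of indices. -/
def blk {A : Type*} {n : ℕ} (a : Fin n → A) (B : Finset (Fin n)) : List A :=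
  (B.sort (· ≤ ·)).map a

/-- `β` is the family of Boolean cumulant functionals of `φ`:
`φ(a₁⋯aₙ) = ∑_{π ∈ I(n)} ∏_{V ∈ π} β((a₁,...,aₙ)|_V)`. -/
def IsBooleanCumulantFamily {A : Type*} [Ring A] [Algebra ℂ A]
    (φ : A →ₗ[ℂ] ℂ) (β : List A → ℂ) : Prop :=
  ∀ (n : ℕ) (a : Fin n → A), 0 < n →
    φ (List.ofFn a).prod = ∑ P ∈ intSet n, ∏ B ∈ P.parts, β (blk a B)

/-- `x₁, x₂` are Boolean independent in `(A, φ)`: `φ` factorizes over alternating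
words from the non-unital subalgebras generated by `x₁` resp. `x₂`. -/
def BoolPair {A : Type*} [Ring A] [Algebra ℂ A] (φ : A →ₗ[ℂ] ℂ) (x₁ x₂ : A) : Prop :=
  ∀ (n : ℕ) (y : Fin n → A) (idx : Fin n → Fin 2),
    (∀ (i : Fin n) (h : i.val + 1 < n), idx i ≠ idx ⟨i.val + 1, h⟩) →
    (∀ i, y i ∈ NonUnitalAlgebra.adjoin ℂ ({![x₁, x₂] (idx i)} : Set A)) →
    φ (List.ofFn y).prod = ∏ i, φ (y i)

/-!
An interval partition of `Fin n` is determined by the least elements of its blocks, so interval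
partitions correspond to compositions of `n`, and the moment–cumulant relation becomes the
recursion `m (n + 1) = ∑ j ≤ n, β (j + 1) * m (n - j)`, which determines the cumulants from the
moments.

Boolean independence makes `φ` multiplicative wherever a word passes from the algebra of `x₁` to
that of `x₂` or back. Hence the pair `(φ (x₁ gⁿ), φ (x₂ gⁿ))` evolves by a `2 × 2` transfer matrix
and the moments `φ (gⁿ)` satisfy the order-two recurrence given by its trace and determinant. The
claimed cumulants form the sequence `o, e, r o, r e, r² o, …` with `o`, `e` the claimed `β₁(g)`,
`β₂(g)` and `r = ab β₂(x₁) β₂(x₂)`; its moments obey the same recurrence with the same first two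
values, so it is the cumulant sequence of `g`.
-/

namespace Finpartition

variable {α : Type*} [DecidableEq α] {s : Finset α} (P : Finpartition s)

lemma mem_part_comm {a b : α} : a ∈ P.part b ↔ b ∈ P.part a := by
  rw [P.mem_part_iff_exists, P.mem_part_iff_exists]
  exact exists_congr fun _ => and_congr_right' and_comm

lemma parts_eq_image_part : P.parts = s.image P.part := by
  ext B
  refine ⟨fun hB => ?_, fun hB => ?_⟩
  · obtain ⟨j, hj, rfl⟩ := P.part_surjOn hB
    exact mem_image_of_mem _ hj
  · obtain ⟨j, hj, rfl⟩ := mem_image.1 hB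
    exact P.part_mem.2 hj

end Finpartition

section IntervalPartitions

variable {n : ℕ}

def blockStarts (P : FP n) : Finset (Fin n) := univ.filter fun j => ∀ k ∈ P.part j, j ≤ k

lemma IsIntervalPart.mem_part_iff {P : FP n} (hP : IsIntervalPart P) {j k : Fin n}
    (hjk : j ≤ k) : k ∈ P.part j ↔ ∀ m ∈ blockStarts P, j < m → k < m := by
  have hpart : ∀ j, P.part j ∈ P.parts := fun j => P.part_mem.2 (mem_univ j)
  constructor
  · intro hk m hm hjm
    by_contra! hmk
    have hmj : m ∈ P.part j := hP _ (hpart j) j m k (P.mem_part (mem_univ j)) hk hjm.le hmk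
    have := (mem_filter.1 hm).2 j (P.mem_part_comm.1 hmj)
    exact this.not_gt hjm
  · intro h
    set m := (P.part k).min' ⟨k, P.mem_part (mem_univ k)⟩
    have hmk : m ∈ P.part k := min'_mem _ _
    rcases le_or_gt m j with hmj | hjm
    · exact P.mem_part_comm.1
        (hP _ (hpart k) m j k hmk (P.mem_part (mem_univ k)) hmj hjk)
    · have hm : m ∈ blockStarts P := by
        refine mem_filter.2 ⟨mem_univ m, fun l hl => ?_⟩
        rw [(P.mem_part_iff_part_eq_part (mem_univ _) (mem_univ _)).1 hmk] at hl
        exact min'_le _ _ hl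
      exact absurd (h m hm hjm) (min'_le _ _ (P.mem_part (mem_univ k))).not_gt

lemma IsIntervalPart.eq_of_blockStarts_eq {P Q : FP n} (hP : IsIntervalPart P)
    (hQ : IsIntervalPart Q) (h : blockStarts P = blockStarts Q) : P = Q := by
  have hpart : ∀ j k : Fin n, j ≤ k → (k ∈ P.part j ↔ k ∈ Q.part j) := fun j k hjk => by
    rw [hP.mem_part_iff hjk, hQ.mem_part_iff hjk, h]
  ext1
  rw [P.parts_eq_image_part, Q.parts_eq_image_part]
  congr 1
  funext j
  ext k
  rcases le_total j k with hjk | hkj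
  · exact hpart j k hjk
  · rw [P.mem_part_comm, Q.mem_part_comm]
    exact hpart k j hkj

end IntervalPartitions

namespace Composition

variable {n : ℕ} (c : Composition n)

def blockFinset (i : Fin c.length) : Finset (Fin n) :=
  univ.map (c.embedding i).toEmbedding

variable {c}

lemma mem_blockFinset_iff_mem_range {i : Fin c.length} {j : Fin n} :
    j ∈ c.blockFinset i ↔ j ∈ Set.range (c.embedding i) := by
  simp [blockFinset]

lemma mem_blockFinset_iff_index {i : Fin c.length} {j : Fin n} :
    j ∈ c.blockFinset i ↔ c.index j = i := by
  rw [mem_blockFinset_iff_mem_range, c.mem_range_embedding_iff', eq_comm]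

lemma mem_blockFinset_iff {i : Fin c.length} {j : Fin n} :
    j ∈ c.blockFinset i ↔ c.sizeUpTo i ≤ j ∧ (j : ℕ) < c.sizeUpTo (i + 1) := by
  rw [mem_blockFinset_iff_mem_range, c.mem_range_embedding_iff]

lemma card_blockFinset (i : Fin c.length) : #(c.blockFinset i) = c.blocksFun i := by
  simp [blockFinset]

lemma blockFinset_nonempty (i : Fin c.length) : (c.blockFinset i).Nonempty := by
  rw [← card_pos, card_blockFinset]
  exact c.one_le_blocksFun i

lemma blockFinset_injective : Function.Injective c.blockFinset := fun i i' h => by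
  obtain ⟨j, hj⟩ := blockFinset_nonempty i
  have hj' := h ▸ hj
  rw [mem_blockFinset_iff_index] at hj hj'
  rw [← hj, hj']

variable (c)

def toFinpartition : FP n :=
  Finpartition.ofExistsUnique (univ.image c.blockFinset) (fun _ _ => subset_univ _)
    (fun j _ => ⟨c.blockFinset (c.index j), ⟨mem_image_of_mem _ (mem_univ _),
      mem_blockFinset_iff_index.2 rfl⟩, by
        rintro _ ⟨hB, hjB⟩
        obtain ⟨i, -, rfl⟩ := mem_image.1 hB
        rw [mem_blockFinset_iff_index.1 hjB]⟩)
    (by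
      simp only [mem_image, mem_univ, true_and, not_exists]
      exact fun i => (blockFinset_nonempty i).ne_empty)

lemma toFinpartition_parts : c.toFinpartition.parts = univ.image c.blockFinset := rfl

lemma isIntervalPart_toFinpartition : IsIntervalPart c.toFinpartition := by
  intro B hB j k l hj hl hjk hkl
  obtain ⟨i, -, rfl⟩ := mem_image.1 hB
  rw [mem_blockFinset_iff] at hj hl ⊢
  exact ⟨hj.1.trans hjk, lt_of_le_of_lt hkl hl.2⟩

lemma prod_parts_toFinpartition {M : Type*} [CommMonoid M] (f : ℕ → M) :
    ∏ B ∈ c.toFinpartition.parts, f #B = (c.blocks.map f).prod := by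
  rw [toFinpartition_parts, prod_image fun i _ i' _ h => blockFinset_injective h,
    ← c.ofFn_blocksFun, List.map_ofFn, List.prod_ofFn]
  simp [card_blockFinset]

lemma part_toFinpartition (j : Fin n) :
    c.toFinpartition.part j = c.blockFinset (c.index j) :=
  Finpartition.part_eq_of_mem _ (mem_image_of_mem _ (mem_univ _))
    (mem_blockFinset_iff_index.2 rfl)

variable {c}

lemma mem_blockStarts_toFinpartition {j : Fin n} :
    j ∈ blockStarts c.toFinpartition ↔ j.castSucc ∈ c.boundaries := by
  have hstart : j ∈ blockStarts c.toFinpartition ↔ c.sizeUpTo (c.index j) = j := by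
    simp only [blockStarts, mem_filter, mem_univ, true_and, part_toFinpartition,
      mem_blockFinset_iff]
    refine ⟨fun h => ?_, fun h k hk => Fin.le_def.2 (h ▸ hk.1)⟩
    have hlt := c.sizeUpTo_strict_mono (c.index j).2
    have := h ⟨_, (c.sizeUpTo_index_le j).trans_lt j.2⟩ ⟨le_rfl, hlt⟩
    exact le_antisymm (c.sizeUpTo_index_le j) this
  rw [hstart, boundaries, mem_map]
  simp only [mem_univ, true_and, RelEmbedding.coe_toEmbedding, boundary,
    OrderEmbedding.coe_ofStrictMono, Fin.ext_iff, Fin.val_castSucc]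
  refine ⟨fun h => ⟨(c.index j).castSucc, h⟩, fun ⟨i, hi⟩ => ?_⟩
  have hil : (i : ℕ) < c.length := by
    by_contra! hil
    rw [c.sizeUpTo_ofLength_le _ hil] at hi
    exact j.2.ne' hi
  have hj : j ∈ c.blockFinset ⟨i, hil⟩ :=
    mem_blockFinset_iff.2 ⟨hi.le, hi ▸ c.sizeUpTo_strict_mono hil⟩
  rw [mem_blockFinset_iff_index.1 hj, hi]

lemma toFinpartition_injective : Function.Injective (toFinpartition (n := n)) := by
  intro c c' h
  apply (compositionEquiv n).injective
  ext1
  show c.boundaries = c'.boundaries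
  ext j
  induction j using Fin.lastCases with
  | last => exact ⟨fun _ => c'.toCompositionAsSet.getLast_mem,
      fun _ => c.toCompositionAsSet.getLast_mem⟩
  | cast j => rw [← mem_blockStarts_toFinpartition, h, mem_blockStarts_toFinpartition]

end Composition

lemma isIntervalPart_iff_exists_toFinpartition {n : ℕ} {P : FP n} :
    IsIntervalPart P ↔ ∃ c : Composition n, c.toFinpartition = P := by
  refine ⟨fun hP => ?_, fun ⟨c, hc⟩ => hc ▸ c.isIntervalPart_toFinpartition⟩
  let S : CompositionAsSet n :=
    { boundaries := insert (Fin.last n) ((blockStarts P).map Fin.castSuccEmb)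
      zero_mem := by
        rcases n with _ | n
        · exact mem_insert_self _ _
        · refine mem_insert_of_mem (mem_map_of_mem _ (?_ : (0 : Fin (n + 1)) ∈ _))
          exact mem_filter.2 ⟨mem_univ _, fun k _ => Fin.zero_le k⟩
      getLast_mem := mem_insert_self _ _ }
  refine ⟨S.toComposition,
    S.toComposition.isIntervalPart_toFinpartition.eq_of_blockStarts_eq hP ?_⟩
  ext j
  rw [Composition.mem_blockStarts_toFinpartition, CompositionAsSet.toComposition_boundaries]
  simp [S, Fin.castSucc_ne_last]

lemma intSet_eq_image_toFinpartition (n : ℕ) :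
    intSet n = univ.image Composition.toFinpartition := by
  ext P
  simp [intSet, isIntervalPart_iff_exists_toFinpartition]

namespace Composition

variable {n : ℕ}

lemma blocks_eq_cons_tail (c : Composition (n + 1)) :
    c.blocks = c.blocks.head! :: c.blocks.tail :=
  (List.cons_head!_tail (mt c.blocks_eq_nil.1 n.succ_ne_zero)).symm

lemma head_pos (c : Composition (n + 1)) : 0 < c.blocks.head! :=
  c.blocks_pos (c.blocks_eq_cons_tail ▸ List.mem_cons_self)

lemma head_add_sum_tail (c : Composition (n + 1)) :
    c.blocks.head! + c.blocks.tail.sum = n + 1 := by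
  rw [← List.sum_cons, ← c.blocks_eq_cons_tail, c.blocks_sum]

def consBlock {j : ℕ} (hj : j ≤ n) (c : Composition (n - j)) :
    Composition (n + 1) where
  blocks := (j + 1) :: c.blocks
  blocks_pos hi := by
    rcases List.mem_cons.1 hi with rfl | hi
    exacts [j.succ_pos, c.blocks_pos hi]
  blocks_sum := by rw [List.sum_cons, c.blocks_sum]; omega

def tailBlocks {j : ℕ} (c : Composition (n + 1)) (hc : c.blocks.head! = j + 1) :
    Composition (n - j) where
  blocks := c.blocks.tail
  blocks_pos hi := c.blocks_pos (List.mem_of_mem_tail hi)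
  blocks_sum := by have := c.head_add_sum_tail; omega

end Composition

section BooleanMoments

variable {R : Type*} [CommSemiring R]

/-- The moments with Boolean cumulants `β`, with compositions of `n` standing for the interval
partitions of `Fin n`. -/
def booleanMoments (β : ℕ → R) (n : ℕ) : R := ∑ c : Composition n, (c.blocks.map β).prod

lemma sum_intSet_prod_eq_booleanMoments (β : ℕ → R) (n : ℕ) :
    ∑ P ∈ intSet n, ∏ B ∈ P.parts, β #B = booleanMoments β n := by
  rw [intSet_eq_image_toFinpartition,
    sum_image fun c _ c' _ h => Composition.toFinpartition_injective h]
  exact sum_congr rfl fun c _ => c.prod_parts_toFinpartition β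

lemma booleanMoments_zero (β : ℕ → R) : booleanMoments β 0 = 1 := by
  simp [booleanMoments, fun c : Composition 0 => c.blocks_eq_nil.2 rfl, composition_card]

lemma booleanMoments_succ (β : ℕ → R) (n : ℕ) :
    booleanMoments β (n + 1) = ∑ j ∈ range (n + 1), β (j + 1) * booleanMoments β (n - j) := by
  rw [booleanMoments, ← sum_fiberwise_of_maps_to (g := fun c : Composition (n + 1) =>
    c.blocks.head! - 1) (t := range (n + 1)) fun c _ => by
      have := c.head_add_sum_tail; rw [mem_range]; omega]
  refine sum_congr rfl fun j hj => ?_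
  have hjn := mem_range.1 hj
  rw [booleanMoments, mul_sum]
  symm
  -- Dropping the first block, of size `j + 1`, leaves a composition of `n - j`.
  refine sum_bij' (fun c _ => Composition.consBlock (by omega) c)
    (fun c hc => c.tailBlocks (by have := c.head_pos; have := (mem_filter.1 hc).2; omega))
    (fun c _ => by simp [Composition.consBlock]) (fun _ _ => mem_univ _)
    (fun c _ => rfl) (fun c hc => ?_) (fun c _ => by simp [Composition.consBlock])
  have := c.head_pos
  have hc := (mem_filter.1 hc).2
  ext1
  change _ :: c.blocks.tail = c.blocks
  conv_rhs => rw [c.blocks_eq_cons_tail]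
  congr 1
  omega

end BooleanMoments

lemma eq_of_booleanMoments_eq {R : Type*} [CommRing R] {β β' : ℕ → R}
    (h : ∀ n, 1 ≤ n → booleanMoments β n = booleanMoments β' n) :
    ∀ n, 1 ≤ n → β n = β' n := by
  intro n
  induction n using Nat.strong_induction_on with
  | _ n ih =>
    intro hn
    obtain ⟨n, rfl⟩ := Nat.exists_eq_add_of_le' hn
    have hn := h (n + 1) hn
    rw [booleanMoments_succ, booleanMoments_succ, sum_range_succ, sum_range_succ, Nat.sub_self,
      booleanMoments_zero, booleanMoments_zero, mul_one, mul_one] at hn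
    have hlower : ∑ j ∈ range n, β (j + 1) * booleanMoments β (n - j)
        = ∑ j ∈ range n, β' (j + 1) * booleanMoments β' (n - j) :=
      sum_congr rfl fun j hj => by
        have := mem_range.1 hj
        rw [ih (j + 1) (by omega) (by omega), h (n - j) (by omega)]
    rwa [hlower, add_right_inj] at hn

section OddEvenGeometric

variable {R : Type*} [CommSemiring R] (o e r : R)

def oddEvenGeometric : ℕ → R
  | 0 => 0
  | 1 => o
  | 2 => e
  | n + 3 => r * oddEvenGeometric (n + 1)

lemma oddEvenGeometric_odd (k : ℕ) : oddEvenGeometric o e r (2 * k + 1) = o * r ^ k := by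
  induction k with
  | zero => simp [oddEvenGeometric]
  | succ k ih =>
    rw [show 2 * (k + 1) + 1 = 2 * k + 3 by ring, oddEvenGeometric, ih]
    ring

lemma oddEvenGeometric_even (k : ℕ) : oddEvenGeometric o e r (2 * k + 2) = e * r ^ k := by
  induction k with
  | zero => simp [oddEvenGeometric]
  | succ k ih =>
    rw [show 2 * (k + 1) + 2 = 2 * k + 1 + 3 by ring, oddEvenGeometric, ih]
    ring

lemma booleanMoments_oddEvenGeometric_add_three (n : ℕ) :
    booleanMoments (oddEvenGeometric o e r) (n + 3)
      = o * booleanMoments (oddEvenGeometric o e r) (n + 2)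
        + (r + e) * booleanMoments (oddEvenGeometric o e r) (n + 1) := by
  rw [booleanMoments_succ, sum_range_succ', sum_range_succ']
  simp only [oddEvenGeometric, Nat.sub_zero, show n + 2 - 1 = n + 1 by omega,
    show ∀ i, n + 2 - (i + 1 + 1) = n - i by omega, mul_assoc, ← mul_sum,
    ← booleanMoments_succ]
  ring

lemma booleanMoments_oddEvenGeometric_eq {m : ℕ → R} (h₁ : m 1 = o) (h₂ : m 2 = o ^ 2 + e)
    (hrec : ∀ n, m (n + 3) = o * m (n + 2) + (r + e) * m (n + 1)) (n : ℕ) :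
    booleanMoments (oddEvenGeometric o e r) (n + 1) = m (n + 1) := by
  let E : LinearRecurrence R := ⟨2, ![r + e, o]⟩
  have hsol : ∀ u : ℕ → R, (∀ n, u (n + 3) = o * u (n + 2) + (r + e) * u (n + 1)) →
      E.IsSolution fun n => u (n + 1) := fun u hu n => by
    simp [E, Fin.sum_univ_two, hu]
    ring
  refine congrFun ((E.eq_iff_eqOn_range_order _ _ (hsol _
    (booleanMoments_oddEvenGeometric_add_three o e r)) (hsol m hrec)).2 ?_) n
  intro k hk
  simp only [E, coe_range, Set.mem_Iio] at hk
  interval_cases k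
  · simp [booleanMoments_succ, booleanMoments_zero, oddEvenGeometric, h₁]
  · simp [booleanMoments_succ, sum_range_succ, booleanMoments_zero, oddEvenGeometric, h₂]
    ring

end OddEvenGeometric

section BooleanIndependence

variable {A : Type*} [Ring A] [Algebra ℂ A] {φ : A →ₗ[ℂ] ℂ} {x₁ x₂ : A}

def IsAltWord (x₁ x₂ : A) (l : List (Fin 2 × A)) : Prop :=
  l.IsChain (fun u v => u.1 ≠ v.1) ∧ ∀ u ∈ l, u.2 ∈ NonUnitalAlgebra.adjoin ℂ {![x₁, x₂] u.1}

lemma BoolPair.map_prod_of_isAltWord (hbool : BoolPair φ x₁ x₂) {l : List (Fin 2 × A)}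
    (hl : IsAltWord x₁ x₂ l) : φ (l.map Prod.snd).prod = (l.map fun u => φ u.2).prod := by
  have := hbool l.length (fun i => l[(i : ℕ)].2) (fun i => l[(i : ℕ)].1)
    (fun i h => List.isChain_iff_getElem.1 hl.1 i h) (fun i => hl.2 _ (List.getElem_mem _))
  rwa [← List.prod_ofFn, List.ofFn_getElem_eq_map l Prod.snd,
    List.ofFn_getElem_eq_map l fun u => φ u.2] at this

lemma IsAltWord.cons {p q : Fin 2} {y y' : A} {l : List (Fin 2 × A)}
    (hl : IsAltWord x₁ x₂ ((q, y) :: l)) (hpq : p ≠ q)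
    (hy' : y' ∈ NonUnitalAlgebra.adjoin ℂ {![x₁, x₂] p}) :
    IsAltWord x₁ x₂ ((p, y') :: (q, y) :: l) :=
  ⟨List.isChain_cons_cons.2 ⟨hpq, hl.1⟩, by simpa [hy'] using hl.2⟩

lemma IsAltWord.mul_head {q : Fin 2} {y y' : A} {l : List (Fin 2 × A)}
    (hl : IsAltWord x₁ x₂ ((q, y) :: l)) (hy' : y' ∈ NonUnitalAlgebra.adjoin ℂ {![x₁, x₂] q}) :
    IsAltWord x₁ x₂ ((q, y' * y) :: l) := by
  refine ⟨?_, ?_⟩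
  · cases l with
    | nil => exact List.isChain_singleton _
    | cons v l => exact List.isChain_cons_cons.2 (List.isChain_cons_cons.1 hl.1)
  · have hmem := hl.2
    simp only [List.mem_cons, forall_eq_or_imp] at hmem ⊢
    exact ⟨mul_mem hy' hmem.1, hmem.2⟩

def altSpan (x₁ x₂ : A) (q : Fin 2) : Submodule ℂ A :=
  Submodule.span ℂ
    {w | ∃ y l, IsAltWord x₁ x₂ ((q, y) :: l) ∧ w = (((q, y) :: l).map Prod.snd).prod}

lemma mem_altSpan_self (q : Fin 2) : ![x₁, x₂] q ∈ altSpan x₁ x₂ q :=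
  Submodule.subset_span ⟨_, [], ⟨List.isChain_singleton _, by
    simpa using NonUnitalAlgebra.self_mem_adjoin_singleton ℂ _⟩, by simp⟩

lemma mul_mem_altSpan {p q : Fin 2} {y z : A}
    (hy : y ∈ NonUnitalAlgebra.adjoin ℂ {![x₁, x₂] p}) (hz : z ∈ altSpan x₁ x₂ q) :
    y * z ∈ altSpan x₁ x₂ p := by
  induction hz using Submodule.span_induction with
  | mem w hw =>
    obtain ⟨y', l, hl, rfl⟩ := hw
    apply Submodule.subset_span
    by_cases hpq : p = q
    · subst hpq
      exact ⟨y * y', l, hl.mul_head hy, by simp [mul_assoc]⟩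
    · exact ⟨y, (q, y') :: l, hl.cons hpq hy, by simp⟩
  | zero => simp
  | add z z' _ _ hz hz' => rw [mul_add]; exact add_mem hz hz'
  | smul c z _ hz => rw [mul_smul_comm]; exact Submodule.smul_mem _ c hz

lemma BoolPair.map_mul_of_mem_altSpan (hbool : BoolPair φ x₁ x₂) {p q : Fin 2} (hpq : p ≠ q)
    {y z : A} (hy : y ∈ NonUnitalAlgebra.adjoin ℂ {![x₁, x₂] p}) (hz : z ∈ altSpan x₁ x₂ q) :
    φ (y * z) = φ y * φ z := by
  induction hz using Submodule.span_induction with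
  | mem w hw =>
    obtain ⟨y', l, hl, rfl⟩ := hw
    have hyw := hbool.map_prod_of_isAltWord (hl.cons hpq hy)
    have hw := hbool.map_prod_of_isAltWord hl
    simp only [List.map_cons, List.prod_cons] at hyw hw ⊢
    rw [hyw, hw]
  | zero => simp
  | add z z' _ _ hz hz' => rw [mul_add, map_add, map_add, hz, hz', mul_add]
  | smul c z _ hz => rw [mul_smul_comm, map_smul, map_smul, hz, smul_eq_mul, smul_eq_mul,
      mul_left_comm]

end BooleanIndependence

section Moments

variable {A : Type*} [Ring A] [Algebra ℂ A] {φ : A →ₗ[ℂ] ℂ} {x₁ x₂ : A} {a b : ℂ} {g : A}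

lemma self_mem_adjoin_vecCons_zero (x₁ x₂ : A) :
    x₁ ∈ NonUnitalAlgebra.adjoin ℂ {![x₁, x₂] 0} :=
  NonUnitalAlgebra.self_mem_adjoin_singleton ℂ x₁

lemma self_mem_adjoin_vecCons_one (x₁ x₂ : A) :
    x₂ ∈ NonUnitalAlgebra.adjoin ℂ {![x₁, x₂] 1} :=
  NonUnitalAlgebra.self_mem_adjoin_singleton ℂ x₂

lemma pow_succ_of_eq_smul_add_smul (hg : g = a • (x₁ * x₂) + b • (x₂ * x₁)) (n : ℕ) :
    g ^ (n + 1) = a • (x₁ * (x₂ * g ^ n)) + b • (x₂ * (x₁ * g ^ n)) := by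
  rw [pow_succ']
  nth_rw 1 [hg]
  simp only [add_mul, smul_mul_assoc, mul_assoc]

lemma mul_pow_mem_altSpan (hg : g = a • (x₁ * x₂) + b • (x₂ * x₁)) (n : ℕ) :
    x₁ * g ^ n ∈ altSpan x₁ x₂ 0 ∧ x₂ * g ^ n ∈ altSpan x₁ x₂ 1 := by
  induction n with
  | zero => simpa using ⟨mem_altSpan_self (x₁ := x₁) (x₂ := x₂) 0, mem_altSpan_self 1⟩
  | succ n ih =>
    have h₁ := self_mem_adjoin_vecCons_zero x₁ x₂
    have h₂ := self_mem_adjoin_vecCons_one x₁ x₂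
    have hg₁ := mul_mem_altSpan h₁ ih.2
    have hg₂ := mul_mem_altSpan h₂ ih.1
    rw [pow_succ_of_eq_smul_add_smul hg, mul_add, mul_add, mul_smul_comm, mul_smul_comm,
      mul_smul_comm, mul_smul_comm]
    exact ⟨add_mem (Submodule.smul_mem _ _ (mul_mem_altSpan h₁ hg₁))
        (Submodule.smul_mem _ _ (mul_mem_altSpan h₁ hg₂)),
      add_mem (Submodule.smul_mem _ _ (mul_mem_altSpan h₂ hg₁))
        (Submodule.smul_mem _ _ (mul_mem_altSpan h₂ hg₂))⟩

variable (hbool : BoolPair φ x₁ x₂) (hg : g = a • (x₁ * x₂) + b • (x₂ * x₁))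
include hbool hg

lemma BoolPair.map_pow_succ (n : ℕ) :
    φ (g ^ (n + 1)) = a * φ x₁ * φ (x₂ * g ^ n) + b * φ x₂ * φ (x₁ * g ^ n) := by
  rw [pow_succ_of_eq_smul_add_smul hg, map_add, map_smul, map_smul,
    hbool.map_mul_of_mem_altSpan zero_ne_one (self_mem_adjoin_vecCons_zero x₁ x₂)
      (mul_pow_mem_altSpan hg n).2,
    hbool.map_mul_of_mem_altSpan one_ne_zero (self_mem_adjoin_vecCons_one x₁ x₂)
      (mul_pow_mem_altSpan hg n).1]
  simp only [smul_eq_mul]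
  ring

lemma BoolPair.map_left_mul_pow_succ (n : ℕ) :
    φ (x₁ * g ^ (n + 1))
      = a * φ (x₁ ^ 2) * φ (x₂ * g ^ n) + b * φ x₁ * φ x₂ * φ (x₁ * g ^ n) := by
  have h₁ := self_mem_adjoin_vecCons_zero x₁ x₂
  have h₂ := self_mem_adjoin_vecCons_one x₁ x₂
  have hg₁ := (mul_pow_mem_altSpan hg n).1
  have hg₂ := (mul_pow_mem_altSpan hg n).2
  rw [pow_succ_of_eq_smul_add_smul hg, mul_add, mul_smul_comm, mul_smul_comm,
    ← mul_assoc x₁ x₁, ← sq, map_add, map_smul, map_smul,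
    hbool.map_mul_of_mem_altSpan zero_ne_one (sq x₁ ▸ mul_mem h₁ h₁) hg₂,
    hbool.map_mul_of_mem_altSpan zero_ne_one h₁ (mul_mem_altSpan h₂ hg₁),
    hbool.map_mul_of_mem_altSpan one_ne_zero h₂ hg₁]
  simp only [smul_eq_mul]
  ring

lemma BoolPair.map_right_mul_pow_succ (n : ℕ) :
    φ (x₂ * g ^ (n + 1))
      = a * φ x₁ * φ x₂ * φ (x₂ * g ^ n) + b * φ (x₂ ^ 2) * φ (x₁ * g ^ n) := by
  have h₁ := self_mem_adjoin_vecCons_zero x₁ x₂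
  have h₂ := self_mem_adjoin_vecCons_one x₁ x₂
  have hg₁ := (mul_pow_mem_altSpan hg n).1
  have hg₂ := (mul_pow_mem_altSpan hg n).2
  rw [pow_succ_of_eq_smul_add_smul hg, mul_add, mul_smul_comm, mul_smul_comm,
    ← mul_assoc x₂ x₂, ← sq, map_add, map_smul, map_smul,
    hbool.map_mul_of_mem_altSpan one_ne_zero (sq x₂ ▸ mul_mem h₂ h₂) hg₁,
    hbool.map_mul_of_mem_altSpan one_ne_zero h₂ (mul_mem_altSpan h₁ hg₂),
    hbool.map_mul_of_mem_altSpan zero_ne_one h₁ hg₂]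
  simp only [smul_eq_mul]
  ring

/-- Cayley–Hamilton for the `2 × 2` transfer matrix of the pair `(φ (x₁ gⁿ), φ (x₂ gⁿ))`. -/
lemma BoolPair.map_pow_add_three (n : ℕ) :
    φ (g ^ (n + 3)) = (a + b) * φ x₁ * φ x₂ * φ (g ^ (n + 2))
      + a * b * (φ (x₁ ^ 2) * φ (x₂ ^ 2) - φ x₁ ^ 2 * φ x₂ ^ 2) * φ (g ^ (n + 1)) := by
  simp only [hbool.map_pow_succ hg, hbool.map_left_mul_pow_succ hg,
    hbool.map_right_mul_pow_succ hg]
  ring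

lemma BoolPair.map_pow_one : φ (g ^ 1) = (a + b) * φ x₁ * φ x₂ := by
  rw [hbool.map_pow_succ hg]
  simp only [pow_zero, mul_one]
  ring

lemma BoolPair.map_pow_two : φ (g ^ 2) = ((a + b) * φ x₁ * φ x₂) ^ 2
    + a * b * ((φ (x₁ ^ 2) - φ x₁ ^ 2) * φ x₂ ^ 2 + (φ (x₂ ^ 2) - φ x₂ ^ 2) * φ x₁ ^ 2) := by
  rw [hbool.map_pow_succ hg, hbool.map_left_mul_pow_succ hg, hbool.map_right_mul_pow_succ hg]
  simp only [pow_zero, mul_one]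
  ring

end Moments

lemma IsBooleanCumulantFamily.map_pow_eq_booleanMoments {A : Type*} [Ring A] [Algebra ℂ A]
    {φ : A →ₗ[ℂ] ℂ} {β : List A → ℂ} (hβ : IsBooleanCumulantFamily φ β) (g : A) {n : ℕ}
    (hn : 1 ≤ n) : φ (g ^ n) = booleanMoments (fun k => β (List.replicate k g)) n := by
  have h := hβ n (fun _ => g) hn
  rw [List.ofFn_const, List.prod_replicate] at h
  rw [h, ← sum_intSet_prod_eq_booleanMoments]
  refine sum_congr rfl fun P _ => prod_congr rfl fun B _ => ?_
  rw [blk, List.map_const', length_sort]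

theorem stmt14_general {A : Type*} [Ring A] [Algebra ℂ A]
    (φ : A →ₗ[ℂ] ℂ)
    (x₁ x₂ : A) (hbool : BoolPair φ x₁ x₂)
    (βc : List A → ℂ) (hβ : IsBooleanCumulantFamily φ βc)
    (a b : ℂ) (g : A) (hg : g = a • (x₁ * x₂) + b • (x₂ * x₁)) :
    (∀ k : ℕ, 1 ≤ k →
      βc (List.replicate (2 * k) g)
        = a * b * ((φ (x₁ ^ 2) - (φ x₁) ^ 2) * (φ x₂) ^ 2
              + (φ (x₂ ^ 2) - (φ x₂) ^ 2) * (φ x₁) ^ 2) *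
            (a * b * (φ (x₁ ^ 2) - (φ x₁) ^ 2) * (φ (x₂ ^ 2) - (φ x₂) ^ 2)) ^ (k - 1)) ∧
    (∀ k : ℕ,
      βc (List.replicate (2 * k + 1) g)
        = (a + b) * φ x₁ * φ x₂ *
            (a * b * (φ (x₁ ^ 2) - (φ x₁) ^ 2) * (φ (x₂ ^ 2) - (φ x₂) ^ 2)) ^ k) := by
  set o := (a + b) * φ x₁ * φ x₂
  set e := a * b * ((φ (x₁ ^ 2) - (φ x₁) ^ 2) * (φ x₂) ^ 2
    + (φ (x₂ ^ 2) - (φ x₂) ^ 2) * (φ x₁) ^ 2)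
  set r := a * b * (φ (x₁ ^ 2) - (φ x₁) ^ 2) * (φ (x₂ ^ 2) - (φ x₂) ^ 2)
  have hrec (n : ℕ) : φ (g ^ (n + 3)) = o * φ (g ^ (n + 2)) + (r + e) * φ (g ^ (n + 1)) := by
    rw [hbool.map_pow_add_three hg]
    ring
  have hcum : ∀ n, 1 ≤ n → βc (List.replicate n g) = oddEvenGeometric o e r n := by
    refine eq_of_booleanMoments_eq fun n hn => ?_
    obtain ⟨n, rfl⟩ := Nat.exists_eq_add_of_le' hn
    rw [← hβ.map_pow_eq_booleanMoments g hn,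
      booleanMoments_oddEvenGeometric_eq o e r (m := fun n => φ (g ^ n))
        (hbool.map_pow_one hg) (hbool.map_pow_two hg) hrec]
  refine ⟨fun k hk => ?_, fun k => ?_⟩
  · obtain ⟨k, rfl⟩ := Nat.exists_eq_add_of_le' hk
    rw [show 2 * (k + 1) = 2 * k + 2 by ring, hcum _ (by omega), oddEvenGeometric_even,
      Nat.add_sub_cancel]
  · rw [hcum _ (by omega), oddEvenGeometric_odd]

/-- For Boolean independent `x₁, x₂` and `g = a x₁x₂ + b x₂x₁` (`a, b ∈ ℂ`), the
Boolean cumulants of `g` are: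
`βₙ(g) = ab(β₂(x₁)β₁(x₂)² + β₂(x₂)β₁(x₁)²)(ab β₂(x₁)β₂(x₂))^{(n−2)/2}` for `n` even
and `βₙ(g) = (a+b) β₁(x₁)β₁(x₂) (ab β₂(x₁)β₂(x₂))^{(n−1)/2}` for `n` odd, where
`β₁(x) = φ(x)` and `β₂(x) = φ(x²) − φ(x)²`. -/
theorem stmt14 {A : Type*} [Ring A] [Algebra ℂ A]
    (φ : A →ₗ[ℂ] ℂ) (hφ1 : φ 1 = 1)
    (x₁ x₂ : A) (hbool : BoolPair φ x₁ x₂)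
    (βc : List A → ℂ) (hβ : IsBooleanCumulantFamily φ βc)
    (a b : ℂ) (g : A) (hg : g = a • (x₁ * x₂) + b • (x₂ * x₁)) :
    (∀ k : ℕ, 1 ≤ k →
      βc (List.replicate (2 * k) g)
        = a * b * ((φ (x₁ ^ 2) - (φ x₁) ^ 2) * (φ x₂) ^ 2
              + (φ (x₂ ^ 2) - (φ x₂) ^ 2) * (φ x₁) ^ 2) *
            (a * b * (φ (x₁ ^ 2) - (φ x₁) ^ 2) * (φ (x₂ ^ 2) - (φ x₂) ^ 2)) ^ (k - 1)) ∧
    (∀ k : ℕ,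
      βc (List.replicate (2 * k + 1) g)
        = (a + b) * φ x₁ * φ x₂ *
            (a * b * (φ (x₁ ^ 2) - (φ x₁) ^ 2) * (φ (x₂ ^ 2) - (φ x₂) ^ 2)) ^ k) :=
  stmt14_general φ x₁ x₂ hbool βc hβ a b g hg
end

section
/- With β_{2k} = d^{k−1}α₂, β_{2k+1} = d^k α₁ and mₙ = ∑_{π ∈ I(n)} β_π, the sequence γ_{o,k} = ∑_{π ∈ I_o(k)} β_π (first block of odd size) satisfies the linear recurrence γ_{o,k+2} − α₁ γ_{o,k+1} − (d + α₂) γ_{o,k} = 0, with γ_{o,1} = α₁ and γ_{o,2} = α₁², and hence γ_{o,k} = (α₁/ω)((α₁+ω)/2)^k − (α₁/ω)((α₁−ω)/2)^k where ω = √(α₁² + 4(d + α₂)). -/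
open Finset
open scoped Classical

/-- The multiplicative weight `β_π = ∏_{V ∈ π} β_{|V|}` of a partition. -/
noncomputable def wt (βf : ℕ → ℂ) {n : ℕ} (P : FP n) : ℂ := ∏ B ∈ P.parts, βf B.card

/-- `mₙ = ∑_{π ∈ I(n)} β_π`, the moments attached to the cumulant sequence `βf`. -/
noncomputable def mSeq (βf : ℕ → ℂ) (n : ℕ) : ℂ := ∑ P ∈ intSet n, wt βf P

/-- `γ_{o,k}`: the sum of `β_π` over interval partitions of `[k]` whose first block
(the block containing the first element) has odd size. -/
noncomputable def gammaO (βf : ℕ → ℂ) (k : ℕ) : ℂ :=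
  ∑ P ∈ (intSet k).filter
      (fun P => ∃ B ∈ P.parts, ∃ h : 0 < k, (⟨0, h⟩ : Fin k) ∈ B ∧ Odd B.card),
    wt βf P

/-- `γ_{e,k}`: the sum of `β_π` over interval partitions of `[k]` whose first block
has even size. -/
noncomputable def gammaE (βf : ℕ → ℂ) (k : ℕ) : ℂ :=
  ∑ P ∈ (intSet k).filter
      (fun P => ∃ B ∈ P.parts, ∃ h : 0 < k, (⟨0, h⟩ : Fin k) ∈ B ∧ Even B.card),
    wt βf P

/-!
If the first block of an interval partition of `[j + m]` has `j` elements, it is `{1, …, j}`, and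
deleting it leaves an interval partition of `[m]`; this is a bijection onto `I(m)` that divides the
weight by `β_j`. Hence `m_n = ∑_{j ≥ 1} β_j m_{n-j}`, and `γ_{o,n}` is the part of this sum over
odd `j`. Since `β_{j+2} = d β_j` and, for odd `j`, `α₁ β_{j+1} = α₂ β_j`, shifting the odd sizes
by two and matching the even sizes `j + 1` with the odd sizes `j` turns
`m_{n+1} = γ_{o,n+1} + (even part)` into the recurrence; with `γ_{o,0} = 0` and `γ_{o,1} = α₁`
its solution is the Binet formula.
-/

namespace Finpartition

variable {α : Type*} [Fintype α] [DecidableEq α] {P Q : Finpartition (univ : Finset α)}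

lemma mem_parts_iff_exists_part_eq {B : Finset α} : B ∈ P.parts ↔ ∃ a, P.part a = B := by
  refine ⟨fun hB => ?_, ?_⟩
  · obtain ⟨a, -, ha⟩ := P.part_surjOn hB
    exact ⟨a, ha⟩
  · rintro ⟨a, rfl⟩
    exact P.part_mem.2 (mem_univ a)

lemma ext_part (h : ∀ a, P.part a = Q.part a) : P = Q := by
  ext B
  simp only [mem_parts_iff_exists_part_eq, h]

lemma part_eq_part_iff_mem {a b : α} : P.part a = P.part b ↔ b ∈ P.part a := by
  rw [P.mem_part_iff_part_eq_part (mem_univ b) (mem_univ a), eq_comm]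

end Finpartition

namespace Fin

variable {j m : ℕ}

@[simp]
lemma castAdd_ne_natAdd (i : Fin j) (a : Fin m) : Fin.castAdd m i ≠ Fin.natAdd j a := by
  simp only [ne_eq, Fin.ext_iff, Fin.val_castAdd, Fin.val_natAdd]
  omega

@[simp]
lemma natAdd_ne_castAdd (i : Fin j) (a : Fin m) : Fin.natAdd j a ≠ Fin.castAdd m i :=
  (castAdd_ne_natAdd i a).symm

end Fin

lemma mem_intSet {n : ℕ} {P : FP n} : P ∈ intSet n ↔ IsIntervalPart P := by
  simp [intSet]

lemma isIntervalPart_iff {n : ℕ} {P : FP n} :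
    IsIntervalPart P ↔ ∀ a b c : Fin n, a ≤ b → b ≤ c → c ∈ P.part a → b ∈ P.part a := by
  refine ⟨fun hP a b c hab hbc hc => hP _ (P.part_mem.2 (mem_univ a)) a b c
    (P.mem_part (mem_univ a)) hc hab hbc, fun h B hB a b c ha hc hab hbc => ?_⟩
  rw [← P.part_eq_of_mem hB ha] at hc ⊢
  exact h a b c hab hbc hc

lemma IsIntervalPart.mem_part_zero_iff {n : ℕ} {P : FP n} (hP : IsIntervalPart P) (hn : 0 < n)
    {x : Fin n} : x ∈ P.part ⟨0, hn⟩ ↔ (x : ℕ) < (P.part ⟨0, hn⟩).card := by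
  have hdown : ∀ x ∈ P.part ⟨0, hn⟩, ∀ y ≤ x, y ∈ P.part ⟨0, hn⟩ := fun x hx y hy =>
    isIntervalPart_iff.1 hP _ y x (Nat.zero_le (y : ℕ)) hy hx
  constructor
  · intro hx
    have := card_le_card fun y hy => hdown x hx y (mem_Iic.1 hy)
    rw [Fin.card_Iic] at this
    omega
  · intro hx
    by_contra hx'
    have := card_le_card fun y hy => mem_Iio.2 <|
      lt_of_not_ge fun hxy => hx' (hdown y hy x hxy)
    rw [Fin.card_Iio] at this
    omega

lemma card_part_zero_mem_Icc {n : ℕ} (P : FP n) (hn : 0 < n) :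
    (P.part ⟨0, hn⟩).card ∈ Icc 1 n := by
  refine mem_Icc.2 ⟨card_pos.2 ⟨_, P.mem_part (mem_univ _)⟩, ?_⟩
  simpa using card_le_univ (P.part ⟨0, hn⟩)

lemma exists_part_mem_zero_iff {n : ℕ} (P : FP n) (hn : 0 < n) (p : ℕ → Prop) :
    (∃ B ∈ P.parts, ∃ h : 0 < n, (⟨0, h⟩ : Fin n) ∈ B ∧ p B.card) ↔
      p (P.part ⟨0, hn⟩).card := by
  refine ⟨fun ⟨B, hB, _, h0, hpB⟩ => ?_, fun h => ⟨_, P.part_mem.2 (mem_univ _), hn,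
    P.mem_part (mem_univ _), h⟩⟩
  rwa [P.part_eq_of_mem hB h0]

lemma mSeq_zero (βf : ℕ → ℂ) : mSeq βf 0 = 1 := by
  have hparts : ∀ P : FP 0, P.parts = ∅ := fun P =>
    P.parts_eq_empty_iff.2 (univ_eq_empty (α := Fin 0))
  have hint : intSet 0 = {⊥} := by
    ext P
    simp only [mem_singleton, mem_intSet]
    exact ⟨fun _ => Finpartition.ext (by rw [hparts, hparts]), fun _ _ _ a => a.elim0⟩
  simp [mSeq, hint, wt, hparts]

section FirstBlock

variable {j m : ℕ}

noncomputable def prependBlock (j : ℕ) (Q : FP m) : FP (j + m) :=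
  Finpartition.ofSetoid <| Setoid.ker
    (Fin.addCases (motive := fun _ => Option (Finset (Fin m))) (fun _ => none)
      fun a => some (Q.part a))

lemma part_prependBlock_castAdd (Q : FP m) (i : Fin j) :
    (prependBlock j Q).part (Fin.castAdd m i) = univ.map (Fin.castAddEmb m) := by
  ext y
  induction y using Fin.addCases <;>
    simp [prependBlock, Finpartition.mem_part_ofSetoid_iff_rel, Setoid.ker, Function.onFun]

lemma part_prependBlock_natAdd (Q : FP m) (a : Fin m) :
    (prependBlock j Q).part (Fin.natAdd j a) = (Q.part a).map (Fin.natAddEmb j) := by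
  ext y
  induction y using Fin.addCases with
  | left i =>
    simp [prependBlock, Finpartition.mem_part_ofSetoid_iff_rel, Setoid.ker, Function.onFun]
  | right b =>
    simp [prependBlock, Finpartition.mem_part_ofSetoid_iff_rel, Setoid.ker, Function.onFun,
      Finpartition.part_eq_part_iff_mem]

lemma mem_map_castAddEmb_iff {y : Fin (j + m)} :
    y ∈ univ.map (Fin.castAddEmb m) ↔ (y : ℕ) < j := by
  induction y using Fin.addCases <;> simp

lemma parts_prependBlock (Q : FP m) (hj : 0 < j) :
    (prependBlock j Q).parts = insert (univ.map (Fin.castAddEmb m))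
      (Q.parts.map (Finset.mapEmbedding (Fin.natAddEmb j)).toEmbedding) := by
  ext B
  simp only [mem_insert, mem_map, Finpartition.mem_parts_iff_exists_part_eq]
  constructor
  · rintro ⟨x, rfl⟩
    induction x using Fin.addCases with
    | left i => exact Or.inl (part_prependBlock_castAdd Q i)
    | right a => exact Or.inr ⟨Q.part a, ⟨a, rfl⟩, (part_prependBlock_natAdd Q a).symm⟩
  · rintro (rfl | ⟨-, ⟨a, rfl⟩, rfl⟩)
    · exact ⟨Fin.castAdd m ⟨0, hj⟩, part_prependBlock_castAdd Q _⟩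
    · exact ⟨Fin.natAdd j a, part_prependBlock_natAdd Q a⟩

lemma wt_prependBlock (βf : ℕ → ℂ) (Q : FP m) (hj : 0 < j) :
    wt βf (prependBlock j Q) = βf j * wt βf Q := by
  have hfirst : univ.map (Fin.castAddEmb m) ∉
      Q.parts.map (Finset.mapEmbedding (Fin.natAddEmb j)).toEmbedding := by
    simp only [mem_map, not_exists, not_and]
    rintro C - hC
    have h0 : Fin.castAdd m ⟨0, hj⟩ ∈ (Finset.mapEmbedding (Fin.natAddEmb j)).toEmbedding C :=
      hC ▸ mem_map_of_mem _ (mem_univ _)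
    obtain ⟨a, -, ha⟩ := mem_map.1 h0
    exact Fin.natAdd_ne_castAdd _ _ ha
  rw [wt, parts_prependBlock Q hj, prod_insert hfirst, prod_map, card_map, card_univ,
    Fintype.card_fin]
  simp [wt]

noncomputable def dropBlock (j : ℕ) (P : FP (j + m)) : FP m :=
  Finpartition.ofSetoid <| Setoid.ker fun a => P.part (Fin.natAdd j a)

lemma mem_part_dropBlock {P : FP (j + m)} {a b : Fin m} :
    b ∈ (dropBlock j P).part a ↔ Fin.natAdd j b ∈ P.part (Fin.natAdd j a) := by
  rw [dropBlock, Finpartition.mem_part_ofSetoid_iff_rel, ← Finpartition.part_eq_part_iff_mem]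
  rfl

lemma dropBlock_prependBlock (Q : FP m) : dropBlock j (prependBlock j Q) = Q :=
  Finpartition.ext_part fun a => by
    ext b
    simp [mem_part_dropBlock, part_prependBlock_natAdd]

lemma prependBlock_dropBlock {P : FP (j + m)} (hP : IsIntervalPart P) (hj : 0 < j)
    (hcard : (P.part ⟨0, by omega⟩).card = j) : prependBlock j (dropBlock j P) = P := by
  have hfirst : ∀ y : Fin (j + m), y ∈ P.part ⟨0, by omega⟩ ↔ (y : ℕ) < j := fun y => by
    rw [hP.mem_part_zero_iff, hcard]
  have hpart : ∀ y : Fin (j + m), (y : ℕ) < j → P.part y = P.part ⟨0, by omega⟩ := fun y hy =>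
    (Finpartition.part_eq_part_iff_mem.2 ((hfirst y).2 hy)).symm
  refine Finpartition.ext_part fun x => ?_
  induction x using Fin.addCases with
  | left i =>
    ext y
    rw [part_prependBlock_castAdd, mem_map_castAddEmb_iff, hpart _ i.isLt, hfirst]
  | right a =>
    ext y
    rw [part_prependBlock_natAdd]
    induction y using Fin.addCases with
    | left i =>
      simp only [mem_map, Fin.natAddEmb_apply, Fin.natAdd_ne_castAdd, and_false, exists_false,
        false_iff]
      intro hi
      have hmem : Fin.natAdd j a ∈ P.part ⟨0, by omega⟩ := by
        rw [← hpart (Fin.castAdd m i) i.isLt, ← Finpartition.part_eq_part_iff_mem.2 hi]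
        exact P.mem_part (mem_univ _)
      simpa using (hfirst _).1 hmem
    | right b =>
      simp [mem_part_dropBlock]

lemma IsIntervalPart.dropBlock {P : FP (j + m)} (hP : IsIntervalPart P) :
    IsIntervalPart (dropBlock j P) := by
  rw [isIntervalPart_iff] at hP ⊢
  intro a b c hab hbc hc
  rw [mem_part_dropBlock] at hc ⊢
  exact hP _ _ _ ((Fin.natAdd_le_natAdd_iff j).2 hab) ((Fin.natAdd_le_natAdd_iff j).2 hbc) hc

lemma IsIntervalPart.prependBlock {Q : FP m} (hQ : IsIntervalPart Q) :
    IsIntervalPart (prependBlock j Q) := by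
  rw [isIntervalPart_iff] at hQ ⊢
  intro a b c hab hbc hc
  induction a using Fin.addCases with
  | left i =>
    rw [part_prependBlock_castAdd, mem_map_castAddEmb_iff] at hc ⊢
    exact lt_of_le_of_lt hbc hc
  | right a =>
    rw [part_prependBlock_natAdd] at hc ⊢
    obtain ⟨c, hca, rfl⟩ := mem_map.1 hc
    rw [Fin.natAddEmb_apply] at hbc
    induction b using Fin.addCases with
    | left i =>
      exact absurd hab (by simp [Fin.le_def]; omega)
    | right b =>
      rw [Fin.natAdd_le_natAdd_iff] at hab hbc
      exact mem_map_of_mem _ (hQ a b c hab hbc hca)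

lemma card_part_zero_prependBlock (Q : FP m) (hj : 0 < j) :
    ((prependBlock j Q).part ⟨0, by omega⟩).card = j := by
  rw [show (⟨0, _⟩ : Fin (j + m)) = Fin.castAdd m ⟨0, hj⟩ from rfl, part_prependBlock_castAdd,
    card_map, card_univ, Fintype.card_fin]

lemma sum_wt_filter_card_part_zero_eq (βf : ℕ → ℂ) (hj : 0 < j) :
    ∑ P ∈ (intSet (j + m)).filter (fun P => (P.part ⟨0, by omega⟩).card = j), wt βf P =
      βf j * mSeq βf m := by
  rw [mSeq, mul_sum]
  refine sum_nbij' (dropBlock j) (prependBlock j) (fun P hP => ?_) (fun Q hQ => ?_)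
    (fun P hP => ?_) (fun Q _ => dropBlock_prependBlock Q) (fun P hP => ?_)
  · simp only [mem_filter, mem_intSet] at hP
    exact mem_intSet.2 hP.1.dropBlock
  · rw [mem_intSet] at hQ
    simp only [mem_filter, mem_intSet]
    exact ⟨hQ.prependBlock, card_part_zero_prependBlock Q hj⟩
  · simp only [mem_filter, mem_intSet] at hP
    exact prependBlock_dropBlock hP.1 hj hP.2
  · simp only [mem_filter, mem_intSet] at hP
    rw [← wt_prependBlock βf _ hj, prependBlock_dropBlock hP.1 hj hP.2]

end FirstBlock

lemma sum_wt_filter_first_block {n : ℕ} (βf : ℕ → ℂ) (p : ℕ → Prop) [DecidablePred p]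
    (hn : 0 < n) :
    ∑ P ∈ (intSet n).filter (fun P => p (P.part ⟨0, hn⟩).card), wt βf P =
      ∑ j ∈ (Icc 1 n).filter p, βf j * mSeq βf (n - j) := by
  rw [← sum_fiberwise_of_maps_to (g := fun P : FP n => (P.part ⟨0, hn⟩).card)
    fun P hP => mem_filter.2 ⟨card_part_zero_mem_Icc P hn, (mem_filter.1 hP).2⟩]
  refine sum_congr rfl fun j hj => ?_
  obtain ⟨⟨hj1, hjn⟩, hpj⟩ := mem_filter.1 hj |>.imp_left mem_Icc.1
  obtain ⟨m, rfl⟩ : ∃ m, n = j + m := ⟨n - j, by omega⟩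
  rw [filter_filter, Nat.add_sub_cancel_left, ← sum_wt_filter_card_part_zero_eq βf hj1]
  refine sum_congr (filter_congr fun P _ => ?_) fun _ _ => rfl
  exact ⟨And.right, fun h => ⟨h.symm ▸ hpj, h⟩⟩

lemma mSeq_eq_sum {n : ℕ} (βf : ℕ → ℂ) (hn : 0 < n) :
    mSeq βf n = ∑ j ∈ Icc 1 n, βf j * mSeq βf (n - j) := by
  simpa [mSeq] using sum_wt_filter_first_block βf (fun _ => True) hn

section Convolution

variable {R : Type*} [CommRing R] {β u : ℕ → R} {d α₂ : R}

def oddConvolution (β u : ℕ → R) (n : ℕ) : R := ∑ j ∈ (Icc 1 n).filter Odd, β j * u (n - j)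

lemma filter_odd_Icc_add_two (n : ℕ) :
    (Icc 1 (n + 2)).filter Odd = insert 1 (((Icc 1 n).filter Odd).map (addRightEmbedding 2)) := by
  ext j
  simp only [mem_filter, mem_Icc, mem_insert, mem_map, addRightEmbedding_apply, Nat.odd_iff]
  constructor
  · rintro ⟨⟨h1, hn⟩, hodd⟩
    by_cases hj : j = 1
    · exact Or.inl hj
    · exact Or.inr ⟨j - 2, ⟨⟨by omega, by omega⟩, by omega⟩, by omega⟩
  · rintro (rfl | ⟨i, ⟨⟨h1, hn⟩, hodd⟩, rfl⟩) <;> omega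

lemma filter_not_odd_Icc_add_one (n : ℕ) :
    (Icc 1 (n + 1)).filter (fun j => ¬Odd j) =
      ((Icc 1 n).filter Odd).map (addRightEmbedding 1) := by
  ext j
  simp only [mem_filter, mem_Icc, mem_map, addRightEmbedding_apply, Nat.odd_iff]
  constructor
  · rintro ⟨⟨h1, hn⟩, heven⟩
    exact ⟨j - 1, ⟨⟨by omega, by omega⟩, by omega⟩, by omega⟩
  · rintro ⟨i, ⟨⟨h1, hn⟩, hodd⟩, rfl⟩
    omega

lemma oddConvolution_add_two (hstep : ∀ i, 1 ≤ i → β (i + 2) = d * β i) (n : ℕ) :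
    oddConvolution β u (n + 2) = β 1 * u (n + 1) + d * oddConvolution β u n := by
  rw [oddConvolution, filter_odd_Icc_add_two, sum_insert (by simp), sum_map, oddConvolution,
    mul_sum]
  refine congrArg₂ _ rfl (sum_congr rfl fun j hj => ?_)
  have hj1 : 1 ≤ j := (mem_Icc.1 (mem_filter.1 hj).1).1
  rw [addRightEmbedding_apply, hstep j hj1, Nat.add_sub_add_right, mul_assoc]

lemma mul_sum_filter_not_odd (hodd : ∀ i, Odd i → β 1 * β (i + 1) = α₂ * β i) (n : ℕ) :
    β 1 * ∑ j ∈ (Icc 1 (n + 1)).filter (fun j => ¬Odd j), β j * u (n + 1 - j) =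
      α₂ * oddConvolution β u n := by
  rw [filter_not_odd_Icc_add_one, sum_map, oddConvolution, mul_sum, mul_sum]
  refine sum_congr rfl fun j hj => ?_
  rw [addRightEmbedding_apply, Nat.add_sub_add_right, ← mul_assoc, hodd j (mem_filter.1 hj).2,
    mul_assoc]

lemma oddConvolution_add_two_eq
    (hu : ∀ n, u (n + 1) = ∑ j ∈ Icc 1 (n + 1), β j * u (n + 1 - j))
    (hstep : ∀ i, 1 ≤ i → β (i + 2) = d * β i) (hodd : ∀ i, Odd i → β 1 * β (i + 1) = α₂ * β i)
    (n : ℕ) :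
    oddConvolution β u (n + 2) =
      β 1 * oddConvolution β u (n + 1) + (d + α₂) * oddConvolution β u n := by
  have heven := mul_sum_filter_not_odd (u := u) hodd n
  rw [oddConvolution_add_two hstep, hu, ← sum_filter_add_sum_filter_not _ Odd]
  unfold oddConvolution at heven ⊢
  linear_combination heven

end Convolution

lemma eq_binet_of_recurrence {K : Type*} [Field K] [NeZero (2 : K)] {u : ℕ → K} {a b ω : K}
    (hω : ω ^ 2 = a ^ 2 + 4 * b) (hω0 : ω ≠ 0) (h0 : u 0 = 0)
    (hrec : ∀ n, u (n + 2) = a * u (n + 1) + b * u n) (k : ℕ) :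
    u k = u 1 / ω * (((a + ω) / 2) ^ k - ((a - ω) / 2) ^ k) := by
  induction k using Nat.twoStepInduction with
  | zero => simp [h0]
  | one => field_simp; ring
  | more n ih₀ ih₁ =>
    have hplus : ((a + ω) / 2) ^ 2 = a * ((a + ω) / 2) + b := by
      field_simp
      linear_combination hω
    have hminus : ((a - ω) / 2) ^ 2 = a * ((a - ω) / 2) + b := by
      field_simp
      linear_combination hω
    rw [hrec, ih₀, ih₁]
    generalize (a + ω) / 2 = r at hplus ⊢
    generalize (a - ω) / 2 = s at hminus ⊢
    linear_combination u 1 / ω * (s ^ n * hminus - r ^ n * hplus)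

lemma gammaO_eq_oddConvolution (βf : ℕ → ℂ) (n : ℕ) :
    gammaO βf n = oddConvolution βf (mSeq βf) n := by
  rcases n.eq_zero_or_pos with rfl | hn
  · simp [gammaO, oddConvolution]
  · rw [gammaO, oddConvolution, ← sum_wt_filter_first_block βf Odd hn]
    exact sum_congr (filter_congr fun P _ => exists_part_mem_zero_iff P hn Odd) fun _ _ => rfl

section Cumulants

variable {α₁ α₂ d : ℂ} {βf : ℕ → ℂ}

lemma cumulant_add_two (hβe : ∀ k : ℕ, 1 ≤ k → βf (2 * k) = d ^ (k - 1) * α₂)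
    (hβo : ∀ k : ℕ, βf (2 * k + 1) = d ^ k * α₁) (i : ℕ) (hi : 1 ≤ i) :
    βf (i + 2) = d * βf i := by
  obtain ⟨k, rfl | rfl⟩ := i.even_or_odd'
  · rw [show 2 * k + 2 = 2 * (k + 1) by ring, hβe _ (by omega), hβe k (by omega),
      Nat.add_sub_cancel, ← mul_assoc, ← pow_succ', Nat.sub_add_cancel (by omega : 1 ≤ k)]
  · rw [show 2 * k + 1 + 2 = 2 * (k + 1) + 1 by ring, hβo, hβo, pow_succ]
    ring

lemma cumulant_one_mul_of_odd (hβe : ∀ k : ℕ, 1 ≤ k → βf (2 * k) = d ^ (k - 1) * α₂)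
    (hβo : ∀ k : ℕ, βf (2 * k + 1) = d ^ k * α₁) (i : ℕ) (hi : Odd i) :
    βf 1 * βf (i + 1) = α₂ * βf i := by
  obtain ⟨k, rfl⟩ := hi
  have hβ₁ : βf 1 = α₁ := by simpa using hβo 0
  rw [show 2 * k + 1 + 1 = 2 * (k + 1) by ring, hβe _ (by omega), hβo, hβ₁, Nat.add_sub_cancel]
  ring

end Cumulants

theorem stmt16_general (α₁ α₂ d ω : ℂ)
    (hω : ω ^ 2 = α₁ ^ 2 + 4 * (d + α₂)) (hω0 : ω ≠ 0)
    (βf : ℕ → ℂ)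
    (hβe : ∀ k : ℕ, 1 ≤ k → βf (2 * k) = d ^ (k - 1) * α₂)
    (hβo : ∀ k : ℕ, βf (2 * k + 1) = d ^ k * α₁) :
    (∀ k : ℕ, 1 ≤ k →
      gammaO βf (k + 2) - α₁ * gammaO βf (k + 1) - (d + α₂) * gammaO βf k = 0) ∧
    gammaO βf 1 = α₁ ∧ gammaO βf 2 = α₁ ^ 2 ∧
    (∀ k : ℕ, 1 ≤ k →
      gammaO βf k = α₁ / ω * ((α₁ + ω) / 2) ^ k - α₁ / ω * ((α₁ - ω) / 2) ^ k) := by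
  have hβ₁ : βf 1 = α₁ := by simpa using hβo 0
  have hrec (n : ℕ) :
      gammaO βf (n + 2) = α₁ * gammaO βf (n + 1) + (d + α₂) * gammaO βf n := by
    simp only [gammaO_eq_oddConvolution, ← hβ₁]
    exact oddConvolution_add_two_eq (fun n => mSeq_eq_sum βf n.succ_pos)
      (cumulant_add_two hβe hβo) (cumulant_one_mul_of_odd hβe hβo) n
  have h₀ : gammaO βf 0 = 0 := by simp [gammaO_eq_oddConvolution, oddConvolution]
  have h₁ : gammaO βf 1 = α₁ := by
    rw [gammaO_eq_oddConvolution, oddConvolution, show (Icc 1 1).filter Odd = {1} by decide,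
      sum_singleton, Nat.sub_self, mSeq_zero, mul_one, hβ₁]
  refine ⟨fun k _ => by rw [hrec]; ring, h₁, by rw [hrec 0, h₁, h₀]; ring, fun k _ => ?_⟩
  rw [eq_binet_of_recurrence hω hω0 h₀ hrec k, h₁, mul_sub]

/-- With `β_{2k} = d^{k−1}α₂`, `β_{2k+1} = d^k α₁`, the sequence
`γ_{o,k} = ∑_{π ∈ I_o(k)} β_π` satisfies the recurrence
`γ_{o,k+2} − α₁ γ_{o,k+1} − (d + α₂) γ_{o,k} = 0` with `γ_{o,1} = α₁`,
`γ_{o,2} = α₁²`, and hence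
`γ_{o,k} = (α₁/ω)((α₁+ω)/2)^k − (α₁/ω)((α₁−ω)/2)^k` where
`ω = √(α₁² + 4(d + α₂))`. -/
theorem stmt16 (α₁ α₂ d ω : ℂ) (hα₁ : α₁ ≠ 0) (hα₂ : α₂ ≠ 0)
    (hω : ω ^ 2 = α₁ ^ 2 + 4 * (d + α₂)) (hω0 : ω ≠ 0)
    (βf : ℕ → ℂ)
    (hβe : ∀ k : ℕ, 1 ≤ k → βf (2 * k) = d ^ (k - 1) * α₂)
    (hβo : ∀ k : ℕ, βf (2 * k + 1) = d ^ k * α₁) :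
    (∀ k : ℕ, 1 ≤ k →
      gammaO βf (k + 2) - α₁ * gammaO βf (k + 1) - (d + α₂) * gammaO βf k = 0) ∧
    gammaO βf 1 = α₁ ∧ gammaO βf 2 = α₁ ^ 2 ∧
    (∀ k : ℕ, 1 ≤ k →
      gammaO βf k = α₁ / ω * ((α₁ + ω) / 2) ^ k - α₁ / ω * ((α₁ - ω) / 2) ^ k) :=
  stmt16_general α₁ α₂ d ω hω hω0 βf hβe hβo
end

section
/- Let x₁ and x₂ be Boolean independent in (A, φ), p = x₁x₂ + x₂x₁ and q = i(x₁x₂ − x₂x₁). Then βₙ(q) = β₂(q)(β₂(x₁)β₂(x₂))^{(n−2)/2} for n even and βₙ(q) = 0 for n odd, where β₂(q) = β₁(x₁)²β₂(x₂) + β₁(x₂)²β₂(x₁). -/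
open Finset
open scoped Classical

/-!
Grouping interval partitions by their first block turns the defining relation of the Boolean
cumulants into `M(z) (1 - η(z)) = 1`, where `M` and `η` are the moment and cumulant series of
`q`. Boolean independence lets `φ` split off the leading letter of an alternating word, so the
numbers `φ(xᵢ dⁿ)`, `d = x₁x₂ - x₂x₁`, obey a linear recursion whose transfer matrix squares to
a scalar. Hence `φ(qⁿ⁺³) = (V + c) φ(qⁿ⁺¹)` with `V = β₂(x₁)β₂(x₂)` and `c = β₂(q)`, that is
`M(z) (1 - (V + c) z²) = 1 - V z²`. Dividing the two identities gives `η(z) (1 - V z²) = c z²`.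
-/

lemma Finset.sum_card_filter_le {α M : Type*} [LinearOrder α] [AddCommMonoid M] (f : ℕ → M)
    (s : Finset α) : ∑ m ∈ s, f #(s.filter (· ≤ m)) = ∑ i ∈ range #s, f (i + 1) := by
  induction s using Finset.induction_on_max with
  | empty => simp
  | insert a s hlt ih =>
    have ha : a ∉ s := fun h => lt_irrefl a (hlt a h)
    have hfilter : ∀ m ∈ s, (insert a s).filter (· ≤ m) = s.filter (· ≤ m) := fun m hm => by
      rw [filter_insert, if_neg (not_le.2 (hlt m hm))]
    have htop : (insert a s).filter (· ≤ a) = insert a s :=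
      filter_true_of_mem fun x hx => (mem_insert.1 hx).elim le_of_eq fun h => (hlt x h).le
    rw [sum_insert ha, sum_congr rfl fun m hm => congrArg f (congrArg card (hfilter m hm)), ih,
      htop, card_insert_of_notMem ha, sum_range_succ, add_comm]

namespace Finpartition

variable {α : Type*} [LinearOrder α] {s : Finset α}

def IsInterval (P : Finpartition s) : Prop :=
  ∀ B ∈ P.parts, ∀ a ∈ B, ∀ c ∈ B, ∀ b ∈ s, a ≤ b → b ≤ c → b ∈ B

lemma parts_avoid_of_mem {P : Finpartition s} {B : Finset α} (hB : B ∈ P.parts) :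
    (P.avoid B).parts = P.parts.erase B := by
  ext C
  simp only [mem_avoid, mem_erase]
  constructor
  · rintro ⟨D, hD, hDB, rfl⟩
    have hne : D ≠ B := by rintro rfl; exact hDB le_rfl
    have hdisj : Disjoint D B := P.disjoint hD hB hne
    rw [hdisj.sdiff_eq_left]
    exact ⟨hne, hD⟩
  · rintro ⟨hne, hC⟩
    have hdisj : Disjoint C B := P.disjoint hC hB hne
    refine ⟨C, hC, fun hle => P.ne_bot hC ?_, hdisj.sdiff_eq_left⟩
    exact hdisj.eq_bot_of_le hle

lemma IsInterval.avoid {P : Finpartition s} (hP : P.IsInterval) {B : Finset α}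
    (hB : B ∈ P.parts) : (P.avoid B).IsInterval := by
  intro C hC a ha c hc b hb
  rw [parts_avoid_of_mem hB] at hC
  exact hP C (mem_of_mem_erase hC) a ha c hc b (mem_sdiff.1 hb).1

lemma part_min_eq_filter_le {P : Finpartition s} (hP : P.IsInterval) (hs : s.Nonempty) :
    ∃ b ∈ s, P.part (s.min' hs) = s.filter (· ≤ b) := by
  have hmin : s.min' hs ∈ s := s.min'_mem hs
  have hne : (P.part (s.min' hs)).Nonempty := P.part_nonempty.2 hmin
  set B := P.part (s.min' hs)
  refine ⟨B.max' hne, P.part_subset _ (B.max'_mem hne), ?_⟩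
  ext x
  simp only [mem_filter]
  refine ⟨fun hx => ⟨P.part_subset _ hx, B.le_max' x hx⟩, fun ⟨hxs, hxb⟩ => ?_⟩
  exact hP B (P.part_mem.2 hmin) _ (P.mem_part_self.2 hmin) _ (B.max'_mem hne) x hxs
    (s.min'_le x hxs) hxb

section Prefix

variable {m : α}

/-- `P ↦ P.avoid (s.filter (· ≤ m))` inverts this on the partitions having
`s.filter (· ≤ m)` as a block. -/
def extendPrefix (hm : m ∈ s) (Q : Finpartition (s \ s.filter (· ≤ m))) : Finpartition s :=
  Q.extend (b := s.filter (· ≤ m)) (nonempty_iff_ne_empty.1 ⟨m, mem_filter.2 ⟨hm, le_rfl⟩⟩)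
    sdiff_disjoint
    (sdiff_union_of_subset (filter_subset _ _))

lemma parts_extendPrefix (hm : m ∈ s) (Q : Finpartition (s \ s.filter (· ≤ m))) :
    (extendPrefix hm Q).parts = insert (s.filter (· ≤ m)) Q.parts :=
  Finpartition.extend_parts _ _ _ _

lemma IsInterval.extendPrefix (hm : m ∈ s) {Q : Finpartition (s \ s.filter (· ≤ m))}
    (hQ : Q.IsInterval) : (extendPrefix hm Q).IsInterval := by
  intro C hC x hx z hz y hy hxy hyz
  rw [parts_extendPrefix, mem_insert] at hC
  rcases hC with rfl | hC
  · exact mem_filter.2 ⟨hy, hyz.trans (mem_filter.1 hz).2⟩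
  · obtain ⟨hxs, hxm⟩ := mem_sdiff.1 (Q.le hC hx)
    refine hQ C hC x hx z hz y (mem_sdiff.2 ⟨hy, fun hym => hxm ?_⟩) hxy hyz
    exact mem_filter.2 ⟨hxs, hxy.trans (mem_filter.1 hym).2⟩

end Prefix

end Finpartition

section IntervalPartitionSum

open Finpartition

variable {α R : Type*} [LinearOrder α] [CommSemiring R] (g : ℕ → R)

noncomputable def intervalPartitionSum (s : Finset α) : R :=
  ∑ P ∈ univ.filter (fun P : Finpartition s => P.IsInterval), ∏ C ∈ P.parts, g #C

lemma intervalPartitionSum_empty : intervalPartitionSum g (∅ : Finset α) = 1 := by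
  have hparts : ∀ P : Finpartition (∅ : Finset α), P.parts = ∅ := fun P =>
    P.parts_eq_empty_iff.2 rfl
  have : Unique (Finpartition (∅ : Finset α)) :=
    inferInstanceAs (Unique (Finpartition (⊥ : Finset α)))
  rw [intervalPartitionSum, filter_true_of_mem fun P _ => by simp [IsInterval, hparts],
    Fintype.sum_unique, hparts, prod_empty]

lemma sum_isInterval_part_min_eq {s : Finset α} (hs : s.Nonempty) {m : α} (hm : m ∈ s) :
    ∑ P ∈ (univ.filter (fun P : Finpartition s => P.IsInterval)).filter
        (fun P => P.part (s.min' hs) = s.filter (· ≤ m)), ∏ C ∈ P.parts, g #C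
      = g #(s.filter (· ≤ m)) * intervalPartitionSum g (s \ s.filter (· ≤ m)) := by
  set B := s.filter (· ≤ m)
  have hmin : s.min' hs ∈ B := mem_filter.2 ⟨s.min'_mem hs, s.min'_le m hm⟩
  have hB : ∀ P : Finpartition s, P.part (s.min' hs) = B → B ∈ P.parts := fun P h =>
    h ▸ P.part_mem.2 (s.min'_mem hs)
  have hBQ : ∀ Q : Finpartition (s \ B), B ∉ Q.parts := fun Q h =>
    (mem_sdiff.1 (Q.le h (mem_filter.2 ⟨hm, le_rfl⟩))).2 (mem_filter.2 ⟨hm, le_rfl⟩)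
  rw [intervalPartitionSum, mul_sum]
  refine sum_nbij' (fun P => P.avoid B) (extendPrefix hm) ?_ ?_ ?_ ?_ ?_
  · simp only [mem_filter, mem_univ, true_and]
    exact fun P ⟨hP, hPB⟩ => hP.avoid (hB P hPB)
  · simp only [mem_filter, mem_univ, true_and]
    refine fun Q hQ => ⟨hQ.extendPrefix hm, (extendPrefix hm Q).part_eq_of_mem ?_ hmin⟩
    exact parts_extendPrefix hm Q ▸ mem_insert_self _ _
  · simp only [mem_filter, mem_univ, true_and]
    intro P ⟨_, hPB⟩
    ext1
    rw [parts_extendPrefix, parts_avoid_of_mem (hB P hPB), insert_erase (hB P hPB)]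
  · intro Q _
    have hBQ' : B ∈ (extendPrefix hm Q).parts := parts_extendPrefix hm Q ▸ mem_insert_self _ _
    ext1
    rw [parts_avoid_of_mem hBQ', parts_extendPrefix, erase_insert (hBQ Q)]
  · simp only [mem_filter, mem_univ, true_and]
    intro P ⟨_, hPB⟩
    rw [parts_avoid_of_mem (hB P hPB)]
    exact (mul_prod_erase _ (fun C => g #C) (hB P hPB)).symm

lemma intervalPartitionSum_eq_sum {s : Finset α} (hs : s.Nonempty) :
    intervalPartitionSum g s
      = ∑ m ∈ s, g #(s.filter (· ≤ m)) * intervalPartitionSum g (s \ s.filter (· ≤ m)) := by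
  have hmaps : ∀ P ∈ univ.filter (fun P : Finpartition s => P.IsInterval),
      P.part (s.min' hs) ∈ s.image fun m => s.filter (· ≤ m) := fun P hP => by
    obtain ⟨m, hm, h⟩ := part_min_eq_filter_le (mem_filter.1 hP).2 hs
    exact mem_image.2 ⟨m, hm, h.symm⟩
  have hinj : Set.InjOn (fun m => s.filter (· ≤ m)) s := by
    intro m hm m' hm' (h : s.filter (· ≤ m) = s.filter (· ≤ m'))
    have hmm' : m ∈ s.filter (· ≤ m') := h ▸ mem_filter.2 ⟨hm, le_rfl⟩
    have hm'm : m' ∈ s.filter (· ≤ m) := h ▸ mem_filter.2 ⟨hm', le_rfl⟩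
    exact le_antisymm (mem_filter.1 hmm').2 (mem_filter.1 hm'm).2
  rw [intervalPartitionSum, ← sum_fiberwise_of_maps_to hmaps, sum_image hinj]
  exact sum_congr rfl fun m hm => sum_isInterval_part_min_eq g hs hm

end IntervalPartitionSum

section MomentSeries

open PowerSeries

variable {α R : Type*} [LinearOrder α] [CommRing R] (g : ℕ → R)

noncomputable def cumulantSeries : R⟦X⟧ := X * PowerSeries.mk fun n => g (n + 1)

@[simp]
lemma coeff_zero_cumulantSeries : coeff 0 (cumulantSeries g) = 0 := by
  simp [cumulantSeries]

@[simp]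
lemma coeff_succ_cumulantSeries (n : ℕ) : coeff (n + 1) (cumulantSeries g) = g (n + 1) := by
  rw [cumulantSeries, coeff_succ_X_mul, coeff_mk]

lemma coeff_succ_invOfUnit_one_sub_cumulantSeries (n : ℕ) :
    coeff (n + 1) (invOfUnit (1 - cumulantSeries g) 1)
      = ∑ i ∈ range (n + 1), g (i + 1) * coeff (n - i) (invOfUnit (1 - cumulantSeries g) 1) := by
  set N := invOfUnit (1 - cumulantSeries g) 1
  have hN : (1 - cumulantSeries g) * N = 1 :=
    mul_invOfUnit _ _ (by simp [cumulantSeries])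
  have hfix : N = 1 + cumulantSeries g * N := by linear_combination hN
  rw [congrArg (coeff (n + 1)) hfix, map_add, coeff_one, if_neg n.succ_ne_zero, zero_add,
    cumulantSeries, mul_assoc,
    coeff_succ_X_mul, coeff_mul, Nat.sum_antidiagonal_eq_sum_range_succ
      (fun i j => coeff i (PowerSeries.mk fun n => g (n + 1)) * coeff j N)]
  simp only [coeff_mk]

lemma intervalPartitionSum_eq_coeff (s : Finset α) :
    intervalPartitionSum g s = coeff (#s) (invOfUnit (1 - cumulantSeries g) 1) := by
  induction hn : #s using Nat.strong_induction_on generalizing s with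
  | _ n ih =>
  rcases s.eq_empty_or_nonempty with rfl | hs
  · subst hn
    simp [intervalPartitionSum_empty]
  obtain ⟨n, rfl⟩ := Nat.exists_eq_succ_of_ne_zero (hn ▸ hs.card_pos.ne')
  have hrest : ∀ m ∈ s, intervalPartitionSum g (s \ s.filter (· ≤ m))
      = coeff (n + 1 - #(s.filter (· ≤ m))) (invOfUnit (1 - cumulantSeries g) 1) := by
    intro m hm
    have hcard : #(s \ s.filter (· ≤ m)) = n + 1 - #(s.filter (· ≤ m)) := by
      rw [card_sdiff_of_subset (filter_subset _ _), hn]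
    have hpos : 0 < #(s.filter (· ≤ m)) := card_pos.2 ⟨m, mem_filter.2 ⟨hm, le_rfl⟩⟩
    exact ih _ (by omega) _ hcard
  rw [intervalPartitionSum_eq_sum g hs, sum_congr rfl fun m hm => by rw [hrest m hm],
    sum_card_filter_le (fun j => g j * coeff (n + 1 - j) _), hn,
    coeff_succ_invOfUnit_one_sub_cumulantSeries]
  exact sum_congr rfl fun i _ => by rw [Nat.add_sub_add_right]

end MomentSeries

lemma intSet_eq_filter_isInterval (n : ℕ) :
    intSet n = univ.filter fun P : FP n => P.IsInterval :=
  filter_congr fun _ _ => forall₂_congr fun _ _ =>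
    ⟨fun h a ha c hc b _ => h a b c ha hc, fun h a b c ha hc => h a ha c hc b (mem_univ b)⟩

lemma blk_const {A : Type*} {n : ℕ} (a : A) (B : Finset (Fin n)) :
    blk (fun _ => a) B = List.replicate #B a := by
  rw [blk, List.map_const', Finset.length_sort]

open PowerSeries in
lemma IsBooleanCumulantFamily.mk_map_pow_mul_one_sub_cumulantSeries {A : Type*} [Ring A]
    [Algebra ℂ A] {φ : A →ₗ[ℂ] ℂ} {βc : List A → ℂ} (hβ : IsBooleanCumulantFamily φ βc)
    (hφ1 : φ 1 = 1) (a : A) :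
    PowerSeries.mk (fun n => φ (a ^ n)) * (1 - cumulantSeries fun j => βc (List.replicate j a))
      = 1 := by
  set G := cumulantSeries fun j => βc (List.replicate j a)
  suffices h : PowerSeries.mk (fun n => φ (a ^ n)) = invOfUnit (1 - G) 1 by
    rw [h, mul_comm, mul_invOfUnit _ _ (by simp [G, cumulantSeries])]
  ext n
  rw [coeff_mk]
  rcases Nat.eq_zero_or_pos n with rfl | hn
  · simp [hφ1]
  have hmoment := hβ n (fun _ => a) hn
  simp only [List.ofFn_const, List.prod_replicate, blk_const] at hmoment
  rw [hmoment, intSet_eq_filter_isInterval]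
  exact (intervalPartitionSum_eq_coeff (fun j => βc (List.replicate j a)) univ).trans
    (by rw [card_univ, Fintype.card_fin])

section SeriesInXSq

open PowerSeries

variable {R : Type*} [CommRing R]

lemma coeff_mul_one_sub_C_mul_X_sq (F : R⟦X⟧) (a : R) (n : ℕ) :
    coeff n (F * (1 - C a * X ^ 2)) = coeff n F - if 2 ≤ n then a * coeff (n - 2) F else 0 := by
  rw [mul_sub, mul_one, map_sub, mul_left_comm, coeff_C_mul, coeff_mul_X_pow']
  split_ifs <;> simp

lemma mk_mul_one_sub_C_mul_X_sq {m : ℕ → R} {V c : R} (h0 : m 0 = 1) (h1 : m 1 = 0)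
    (h2 : m 2 = c) (hrec : ∀ n, m (n + 3) = (V + c) * m (n + 1)) :
    PowerSeries.mk m * (1 - C (V + c) * X ^ 2) = 1 - C V * X ^ 2 := by
  ext n
  rw [coeff_mul_one_sub_C_mul_X_sq, coeff_mk, map_sub, coeff_one, coeff_C_mul_X_pow]
  match n with
  | 0 => simp [h0]
  | 1 => simp [h1]
  | 2 => simp [h0, h2]
  | n + 3 => simp [hrec]

lemma mul_one_sub_C_mul_X_sq_of_mul_one_sub_eq_one {M B : R⟦X⟧} {V c : R}
    (hMB : M * (1 - B) = 1) (hM : M * (1 - C (V + c) * X ^ 2) = 1 - C V * X ^ 2) :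
    B * (1 - C V * X ^ 2) = C c * X ^ 2 := by
  linear_combination (1 - B) * hM - (1 - C (V + c) * X ^ 2) * hMB + X ^ 2 * map_add C V c

lemma coeff_of_mul_one_sub_C_mul_X_sq_eq {B : R⟦X⟧} {V c : R}
    (hB : B * (1 - C V * X ^ 2) = C c * X ^ 2) (hB0 : coeff 0 B = 0) (k : ℕ) :
    coeff (2 * k + 1) B = 0 ∧ coeff (2 * k + 2) B = c * V ^ k := by
  have hcoeff : ∀ n, coeff n (B * (1 - C V * X ^ 2)) = coeff n (C c * X ^ 2) := by
    rw [hB]; intro n; rfl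
  simp only [coeff_mul_one_sub_C_mul_X_sq, coeff_C_mul_X_pow] at hcoeff
  have hrec : ∀ n, coeff (n + 3) B = V * coeff (n + 1) B := fun n => by
    simpa [sub_eq_zero] using hcoeff (n + 3)
  induction k with
  | zero => simpa [hB0] using And.intro (hcoeff 1) (hcoeff 2)
  | succ k ih =>
    rw [show 2 * (k + 1) + 1 = 2 * k + 3 by ring, show 2 * (k + 1) + 2 = (2 * k + 1) + 3 by ring,
      hrec, hrec, ih.1, ih.2]
    constructor <;> ring

end SeriesInXSq

section BooleanIndependence

variable {A : Type*} [Ring A] [Algebra ℂ A] {φ : A →ₗ[ℂ] ℂ} {x₁ x₂ : A}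

def IsAlternating {n : ℕ} (idx : Fin n → Fin 2) : Prop :=
  ∀ (i : Fin n) (h : i.val + 1 < n), idx i ≠ idx ⟨i.val + 1, h⟩

lemma IsAlternating.cons {n : ℕ} {idx : Fin (n + 1) → Fin 2} (h : IsAlternating idx) {j : Fin 2}
    (hj : j ≠ idx 0) : IsAlternating (Fin.cons j idx : Fin (n + 2) → Fin 2) := by
  intro i hi
  cases i using Fin.cases with
  | zero => simpa using hj
  | succ i =>
    have hsucc : (⟨i.succ.val + 1, hi⟩ : Fin (n + 2))
        = Fin.succ ⟨i.val + 1, by simp at hi; omega⟩ := Fin.ext (by simp)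
    rw [hsucc, Fin.cons_succ, Fin.cons_succ]
    exact h i _

variable (x₁ x₂) in
def alternatingProducts (i : Fin 2) : Set A :=
  {a | ∃ (n : ℕ) (y : Fin (n + 1) → A) (idx : Fin (n + 1) → Fin 2), IsAlternating idx ∧
    idx 0 = i ∧ (∀ k, y k ∈ NonUnitalAlgebra.adjoin ℂ {![x₁, x₂] (idx k)}) ∧ (List.ofFn y).prod = a}

lemma self_mem_alternatingProducts (i : Fin 2) : ![x₁, x₂] i ∈ alternatingProducts x₁ x₂ i :=
  ⟨0, fun _ => ![x₁, x₂] i, fun _ => i, fun _ h => absurd h (by omega), rfl,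
    fun _ => NonUnitalAlgebra.self_mem_adjoin_singleton ℂ _, by simp⟩

lemma mul_mem_alternatingProducts {i j : Fin 2} {a : A} (ha : a ∈ alternatingProducts x₁ x₂ j) :
    ![x₁, x₂] i * a ∈ alternatingProducts x₁ x₂ i := by
  obtain ⟨n, y, idx, halt, hidx, hy, rfl⟩ := ha
  have hxi := NonUnitalAlgebra.self_mem_adjoin_singleton ℂ (![x₁, x₂] i)
  by_cases hij : i = j
  · subst hij
    refine ⟨n, Fin.cons (![x₁, x₂] i * y 0) (Fin.tail y), idx, halt, hidx, ?_, ?_⟩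
    · intro k
      cases k using Fin.cases with
      | zero =>
        have hy0 := hy 0
        rw [hidx] at hy0 ⊢
        exact mul_mem hxi hy0
      | succ k => exact hy k.succ
    · rw [List.ofFn_cons, List.ofFn_succ, List.prod_cons, List.prod_cons, mul_assoc]
      rfl
  · refine ⟨n + 1, Fin.cons (![x₁, x₂] i) y, Fin.cons i idx, halt.cons (hidx ▸ hij), rfl, ?_, ?_⟩
    · intro k
      cases k using Fin.cases with
      | zero => exact hxi
      | succ k => exact hy k
    · rw [List.ofFn_cons, List.prod_cons]

lemma BoolPair.map_mul_of_mem_alternatingProducts (hbool : BoolPair φ x₁ x₂) {i j : Fin 2}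
    (hij : i ≠ j) {y a : A} (hy : y ∈ NonUnitalAlgebra.adjoin ℂ {![x₁, x₂] i})
    (ha : a ∈ alternatingProducts x₁ x₂ j) : φ (y * a) = φ y * φ a := by
  obtain ⟨n, w, idx, halt, rfl, hw, rfl⟩ := ha
  have hmem : ∀ k, (Fin.cons y w : Fin (n + 2) → A) k
      ∈ NonUnitalAlgebra.adjoin ℂ {![x₁, x₂] ((Fin.cons i idx : Fin (n + 2) → Fin 2) k)} := by
    intro k
    cases k using Fin.cases with
    | zero => exact hy
    | succ k => exact hw k
  have hcons := hbool (n + 2) _ _ (halt.cons hij) hmem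
  rw [List.ofFn_cons, List.prod_cons] at hcons
  rw [hcons, Fin.prod_univ_succ, hbool (n + 1) w idx halt hw]
  simp

variable (x₁ x₂) in
noncomputable def alternatingSpan (i : Fin 2) : Submodule ℂ A :=
  Submodule.span ℂ (alternatingProducts x₁ x₂ i)

lemma self_mem_alternatingSpan (i : Fin 2) : ![x₁, x₂] i ∈ alternatingSpan x₁ x₂ i :=
  Submodule.subset_span (self_mem_alternatingProducts i)

lemma mul_mem_alternatingSpan {i j : Fin 2} {a : A} (ha : a ∈ alternatingSpan x₁ x₂ j) :
    ![x₁, x₂] i * a ∈ alternatingSpan x₁ x₂ i := by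
  have hle : alternatingSpan x₁ x₂ j
      ≤ (alternatingSpan x₁ x₂ i).comap (LinearMap.mulLeft ℂ (![x₁, x₂] i)) :=
    Submodule.span_le.2 fun b hb => Submodule.subset_span (mul_mem_alternatingProducts hb)
  exact hle ha

lemma BoolPair.map_mul_of_mem_alternatingSpan (hbool : BoolPair φ x₁ x₂) {i j : Fin 2}
    (hij : i ≠ j) {y a : A} (hy : y ∈ NonUnitalAlgebra.adjoin ℂ {![x₁, x₂] i})
    (ha : a ∈ alternatingSpan x₁ x₂ j) : φ (y * a) = φ y * φ a := by
  have heq : Set.EqOn (φ ∘ₗ LinearMap.mulLeft ℂ y) (φ y • φ : A →ₗ[ℂ] ℂ)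
      (Submodule.span ℂ (alternatingProducts x₁ x₂ j)) :=
    LinearMap.eqOn_span' fun b hb => hbool.map_mul_of_mem_alternatingProducts hij hy hb
  simpa using heq ha

end BooleanIndependence

section Commutator

variable {A : Type*} [Ring A] [Algebra ℂ A] {φ : A →ₗ[ℂ] ℂ} {x₁ x₂ : A}

lemma mul_commutator_pow_mem_alternatingSpan (i : Fin 2) (n : ℕ) :
    ![x₁, x₂] i * (x₁ * x₂ - x₂ * x₁) ^ n ∈ alternatingSpan x₁ x₂ i := by
  induction n generalizing i with
  | zero => simpa using self_mem_alternatingSpan i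
  | succ n ih =>
    have hexpand : ![x₁, x₂] i * (x₁ * x₂ - x₂ * x₁) ^ (n + 1)
        = ![x₁, x₂] i * (![x₁, x₂] 0 * (![x₁, x₂] 1 * (x₁ * x₂ - x₂ * x₁) ^ n))
          - ![x₁, x₂] i * (![x₁, x₂] 1 * (![x₁, x₂] 0 * (x₁ * x₂ - x₂ * x₁) ^ n)) := by
      simp [pow_succ', mul_sub, sub_mul, mul_assoc]
    rw [hexpand]
    exact sub_mem (mul_mem_alternatingSpan (mul_mem_alternatingSpan (ih 1)))
      (mul_mem_alternatingSpan (mul_mem_alternatingSpan (ih 0)))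

section

variable (hbool : BoolPair φ x₁ x₂) {i j : Fin 2} (hij : i ≠ j) {z : A}
  (hi : ![x₁, x₂] i * z ∈ alternatingSpan x₁ x₂ i) (hj : ![x₁, x₂] j * z ∈ alternatingSpan x₁ x₂ j)
include hbool hij hi hj

lemma BoolPair.map_commutator_mul :
    φ ((![x₁, x₂] i * ![x₁, x₂] j - ![x₁, x₂] j * ![x₁, x₂] i) * z)
      = φ (![x₁, x₂] i) * φ (![x₁, x₂] j * z) - φ (![x₁, x₂] j) * φ (![x₁, x₂] i * z) := by
  have hxi := NonUnitalAlgebra.self_mem_adjoin_singleton ℂ (![x₁, x₂] i)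
  have hxj := NonUnitalAlgebra.self_mem_adjoin_singleton ℂ (![x₁, x₂] j)
  rw [sub_mul, mul_assoc, mul_assoc, map_sub, hbool.map_mul_of_mem_alternatingSpan hij hxi hj,
    hbool.map_mul_of_mem_alternatingSpan hij.symm hxj hi]

lemma BoolPair.map_mul_commutator_mul :
    φ (![x₁, x₂] i * ((![x₁, x₂] i * ![x₁, x₂] j - ![x₁, x₂] j * ![x₁, x₂] i) * z))
      = φ (![x₁, x₂] i ^ 2) * φ (![x₁, x₂] j * z)
        - φ (![x₁, x₂] i) * φ (![x₁, x₂] j) * φ (![x₁, x₂] i * z) := by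
  have hxi := NonUnitalAlgebra.self_mem_adjoin_singleton ℂ (![x₁, x₂] i)
  have hxj := NonUnitalAlgebra.self_mem_adjoin_singleton ℂ (![x₁, x₂] j)
  have hexpand : ![x₁, x₂] i * ((![x₁, x₂] i * ![x₁, x₂] j - ![x₁, x₂] j * ![x₁, x₂] i) * z)
      = ![x₁, x₂] i ^ 2 * (![x₁, x₂] j * z) - ![x₁, x₂] i * (![x₁, x₂] j * (![x₁, x₂] i * z)) := by
    simp [pow_two, mul_sub, sub_mul, mul_assoc]
  have hxi2 : ![x₁, x₂] i ^ 2 ∈ NonUnitalAlgebra.adjoin ℂ {![x₁, x₂] i} := by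
    rw [pow_two]
    exact mul_mem hxi hxi
  rw [hexpand, map_sub, hbool.map_mul_of_mem_alternatingSpan hij hxi2 hj,
    hbool.map_mul_of_mem_alternatingSpan hij hxi (mul_mem_alternatingSpan hi),
    hbool.map_mul_of_mem_alternatingSpan hij.symm hxj hi, mul_assoc]

end

end Commutator

section CommutatorMoments

open PowerSeries

variable {A : Type*} [Ring A] [Algebra ℂ A] {φ : A →ₗ[ℂ] ℂ} {x₁ x₂ : A}

def booleanVariance (φ : A →ₗ[ℂ] ℂ) (x : A) : ℂ := φ (x ^ 2) - φ x ^ 2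

variable (hbool : BoolPair φ x₁ x₂)
include hbool

lemma BoolPair.map_commutator_pow_succ (n : ℕ) :
    φ ((x₁ * x₂ - x₂ * x₁) ^ (n + 1))
      = φ x₁ * φ (x₂ * (x₁ * x₂ - x₂ * x₁) ^ n) - φ x₂ * φ (x₁ * (x₁ * x₂ - x₂ * x₁) ^ n) := by
  simpa [pow_succ'] using hbool.map_commutator_mul (i := 0) (j := 1) (by decide)
    (mul_commutator_pow_mem_alternatingSpan 0 n) (mul_commutator_pow_mem_alternatingSpan 1 n)

lemma BoolPair.map_mul_commutator_pow_succ (n : ℕ) :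
    φ (x₁ * (x₁ * x₂ - x₂ * x₁) ^ (n + 1))
        = φ (x₁ ^ 2) * φ (x₂ * (x₁ * x₂ - x₂ * x₁) ^ n)
          - φ x₁ * φ x₂ * φ (x₁ * (x₁ * x₂ - x₂ * x₁) ^ n) ∧
      φ (x₂ * (x₁ * x₂ - x₂ * x₁) ^ (n + 1))
        = φ x₂ * φ x₁ * φ (x₂ * (x₁ * x₂ - x₂ * x₁) ^ n)
          - φ (x₂ ^ 2) * φ (x₁ * (x₁ * x₂ - x₂ * x₁) ^ n) := by
  have h₁ := hbool.map_mul_commutator_mul (i := 0) (j := 1) (by decide)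
    (mul_commutator_pow_mem_alternatingSpan 0 n) (mul_commutator_pow_mem_alternatingSpan 1 n)
  have h₂ := hbool.map_mul_commutator_mul (i := 1) (j := 0) (by decide)
    (mul_commutator_pow_mem_alternatingSpan 1 n) (mul_commutator_pow_mem_alternatingSpan 0 n)
  simp only [Matrix.cons_val_zero, Matrix.cons_val_one] at h₁ h₂
  rw [← neg_sub, neg_mul, mul_neg, map_neg, neg_eq_iff_eq_neg] at h₂
  refine ⟨by rw [pow_succ', ← h₁], by rw [pow_succ', h₂]; ring⟩

lemma BoolPair.map_commutator_pow_add_three (n : ℕ) :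
    φ ((x₁ * x₂ - x₂ * x₁) ^ (n + 3))
      = (φ x₁ ^ 2 * φ x₂ ^ 2 - φ (x₁ ^ 2) * φ (x₂ ^ 2)) * φ ((x₁ * x₂ - x₂ * x₁) ^ (n + 1)) := by
  rw [hbool.map_commutator_pow_succ, hbool.map_commutator_pow_succ,
    (hbool.map_mul_commutator_pow_succ (n + 1)).1, (hbool.map_mul_commutator_pow_succ (n + 1)).2,
    (hbool.map_mul_commutator_pow_succ n).1, (hbool.map_mul_commutator_pow_succ n).2]
  ring

lemma BoolPair.mk_map_smul_commutator_pow_mul_one_sub (hφ1 : φ 1 = 1) :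
    PowerSeries.mk (fun n => φ ((Complex.I • (x₁ * x₂ - x₂ * x₁)) ^ n))
        * (1 - C (booleanVariance φ x₁ * booleanVariance φ x₂
          + (φ x₁ ^ 2 * booleanVariance φ x₂ + φ x₂ ^ 2 * booleanVariance φ x₁)) * X ^ 2)
      = 1 - C (booleanVariance φ x₁ * booleanVariance φ x₂) * X ^ 2 := by
  have hpow : ∀ n, φ ((Complex.I • (x₁ * x₂ - x₂ * x₁)) ^ n)
      = Complex.I ^ n * φ ((x₁ * x₂ - x₂ * x₁) ^ n) := fun n => by
    rw [smul_pow, map_smul, smul_eq_mul]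
  have h₁ := hbool.map_commutator_pow_succ 0
  have h₂ := hbool.map_commutator_pow_succ 1
  rw [(hbool.map_mul_commutator_pow_succ 0).1, (hbool.map_mul_commutator_pow_succ 0).2] at h₂
  simp only [pow_zero, mul_one] at h₁ h₂
  refine mk_mul_one_sub_C_mul_X_sq ?_ ?_ ?_ fun n => ?_
  · simp [hφ1]
  · rw [hpow, h₁]
    ring
  · rw [hpow, h₂, booleanVariance, booleanVariance, Complex.I_sq]
    ring
  · rw [hpow, hpow, hbool.map_commutator_pow_add_three, booleanVariance, booleanVariance,
      pow_add _ (n + 1) 2, Complex.I_sq]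
    ring

end CommutatorMoments

/-- For Boolean independent `x₁, x₂` and the commutator `q = i(x₁x₂ − x₂x₁)`:
`βₙ(q) = β₂(q)(β₂(x₁)β₂(x₂))^{(n−2)/2}` for `n` even and `βₙ(q) = 0` for `n` odd,
where `β₂(q) = β₁(x₁)²β₂(x₂) + β₁(x₂)²β₂(x₁)`, `β₁(x) = φ(x)`,
`β₂(x) = φ(x²) − φ(x)²`. -/
theorem stmt18 {A : Type*} [Ring A] [Algebra ℂ A]
    (φ : A →ₗ[ℂ] ℂ) (hφ1 : φ 1 = 1)
    (x₁ x₂ : A) (hbool : BoolPair φ x₁ x₂)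
    (βc : List A → ℂ) (hβ : IsBooleanCumulantFamily φ βc)
    (q : A) (hq : q = Complex.I • (x₁ * x₂ - x₂ * x₁)) :
    (∀ k : ℕ, 1 ≤ k →
      βc (List.replicate (2 * k) q)
        = ((φ x₁) ^ 2 * (φ (x₂ ^ 2) - (φ x₂) ^ 2)
            + (φ x₂) ^ 2 * (φ (x₁ ^ 2) - (φ x₁) ^ 2)) *
          ((φ (x₁ ^ 2) - (φ x₁) ^ 2) * (φ (x₂ ^ 2) - (φ x₂) ^ 2)) ^ (k - 1)) ∧
    (∀ k : ℕ, βc (List.replicate (2 * k + 1) q) = 0) := by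
  subst hq
  have hseries := mul_one_sub_C_mul_X_sq_of_mul_one_sub_eq_one
    (hβ.mk_map_pow_mul_one_sub_cumulantSeries hφ1 _)
    (hbool.mk_map_smul_commutator_pow_mul_one_sub hφ1)
  have hcumulants := coeff_of_mul_one_sub_C_mul_X_sq_eq hseries (coeff_zero_cumulantSeries _)
  refine ⟨fun k hk => ?_, fun k => ?_⟩
  · obtain ⟨k, rfl⟩ := Nat.exists_eq_add_of_le' hk
    simpa [booleanVariance, mul_add] using (hcumulants k).2
  · simpa using (hcumulants k).1
end
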